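/- arXiv:1306.1957 — 13 statements merged into one kernel-verified Lean document; each statement's English description precedes it below -/
import Mathlib

section
/- A graph G admits an AND(1)-realization if and only if there exists a linear ordering < of its vertices satisfying the four point condition: for every four vertices x < u < v < y, if xv and uy are edges of G then uv is an edge of G. -/
/-! Along the representative points `p`, any realization satisfies the four point condition in
its weak form `p x ≤ p u ≤ p v ≤ p y`: the intervals of `u` and `v` reach `p y` and `p x`
respectively. Breaking ties in `p` arbitrarily gives a linear ordering.
Conversely, given an ordering `f` with the four point condition, take `p = f` and let the
interval of `v` be the hull of `f` on the closed neighbourhood of `v`. Mutual containment of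
`f u < f v` then produces neighbours `x` of `v` and `y` of `u` with `f x ≤ f u < f v ≤ f y`,
and the four point condition makes `u` and `v` adjacent. -/

/-- An `AND(1)`-realization of `G`: each vertex `v` gets a closed interval
`[L v, R v]` and a representative point `p v` in it, with adjacency of distinct
vertices iff mutual containment of the representative points. -/
def IsAND1Real {V : Type*} (G : SimpleGraph V) (L R p : V → ℝ) : Prop :=
  (∀ v, L v ≤ p v ∧ p v ≤ R v) ∧
    ∀ u v : V, u ≠ v →
      (G.Adj u v ↔ L u ≤ p v ∧ p v ≤ R u ∧ L v ≤ p u ∧ p u ≤ R v)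

/-- A central (`c`-)`AND(1)`-realization: moreover each representative point is
the midpoint of its interval. -/
def IsCAND1Real {V : Type*} (G : SimpleGraph V) (L R p : V → ℝ) : Prop :=
  IsAND1Real G L R p ∧ ∀ v, p v = (L v + R v) / 2

/-- The class `AND(1)`. -/
def InAND1 {V : Type*} (G : SimpleGraph V) : Prop :=
  ∃ L R p : V → ℝ, IsAND1Real G L R p

/-- The class `c-AND(1)`. -/
def InCAND1 {V : Type*} (G : SimpleGraph V) : Prop :=
  ∃ L R p : V → ℝ, IsCAND1Real G L R p

/-- A linear ordering of the vertices (an injective map to `ℝ`) satisfying the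
four point condition: `x < u < v < y` with `xv, uy ∈ E` implies `uv ∈ E`. -/
def FourPointCond {V : Type*} (G : SimpleGraph V) (f : V → ℝ) : Prop :=
  Function.Injective f ∧
    ∀ x u v y : V, f x < f u → f u < f v → f v < f y →
      G.Adj x v → G.Adj u y → G.Adj u v

section

open Finset

variable {V : Type*} {G : SimpleGraph V}

theorem IsAND1Real.adj_of_le {L R p : V → ℝ} (h : IsAND1Real G L R p) {x u v y : V}
    (hxu : p x ≤ p u) (huv : p u ≤ p v) (hvy : p v ≤ p y) (hxv : G.Adj x v) (huy : G.Adj u y)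
    (hne : u ≠ v) : G.Adj u v := by
  obtain ⟨-, -, hLv, -⟩ := (h.2 x v hxv.ne).mp hxv
  obtain ⟨-, hRu, -, -⟩ := (h.2 u y huy.ne).mp huy
  obtain ⟨hLu, -⟩ := h.1 u
  obtain ⟨-, hRv⟩ := h.1 v
  exact (h.2 u v hne).mpr ⟨by linarith, by linarith, by linarith, by linarith⟩

theorem exists_injective_real_le_of_lt {α : Type*} [LinearOrder α] [Countable V] (p : V → α) :
    ∃ f : V → ℝ, Function.Injective f ∧ ∀ a b, f a < f b → p a ≤ p b := by
  obtain ⟨e, he⟩ := Countable.exists_injective_nat V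
  let k : V → α ×ₗ ℕ := fun v => toLex (p v, e v)
  have hk : Function.Injective k := fun a b hab => he (congrArg Prod.snd (toLex.injective hab))
  have : Countable (Set.range k) := (Set.countable_range k).to_subtype
  obtain ⟨g⟩ := Order.embedding_from_countable_to_dense (Set.range k) ℝ
  refine ⟨fun v => g ⟨k v, v, rfl⟩, fun a b hab => hk (congrArg Subtype.val (g.injective hab)),
    fun a b hab => Prod.Lex.monotone_fst _ _ (g.lt_iff_lt.mp hab).le⟩

theorem IsAND1Real.exists_fourPointCond [Countable V] {L R p : V → ℝ}
    (h : IsAND1Real G L R p) : ∃ f : V → ℝ, FourPointCond G f := by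
  obtain ⟨f, hf, hfp⟩ := exists_injective_real_le_of_lt p
  refine ⟨f, hf, fun x u v y hxu huv hvy hxv huy => ?_⟩
  exact h.adj_of_le (hfp _ _ hxu) (hfp _ _ huv) (hfp _ _ hvy) hxv huy (hf.ne_iff.mp huv.ne)

theorem FourPointCond.adj_of_le_of_lt_of_le {f : V → ℝ} (hf : FourPointCond G f)
    {x u v y : V} (hxu : f x ≤ f u) (huv : f u < f v) (hvy : f v ≤ f y) (hxv : G.Adj x v)
    (huy : G.Adj u y) : G.Adj u v := by
  rcases hxu.eq_or_lt with hxu | hxu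
  · rwa [← hf.1 hxu]
  rcases hvy.eq_or_lt with hvy | hvy
  · rwa [hf.1 hvy]
  exact hf.2 x u v y hxu huv hvy hxv huy

section Hull

variable [Fintype V] [DecidableEq V] [DecidableRel G.Adj]

def closedNbhd (G : SimpleGraph V) [DecidableRel G.Adj] (v : V) : Finset V :=
  insert v (G.neighborFinset v)

theorem mem_closedNbhd {v w : V} : w ∈ closedNbhd G v ↔ w = v ∨ G.Adj v w := by
  simp [closedNbhd]

theorem self_mem_closedNbhd (v : V) : v ∈ closedNbhd G v := mem_insert_self _ _

theorem closedNbhd_nonempty (v : V) : (closedNbhd G v).Nonempty := ⟨v, self_mem_closedNbhd v⟩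

theorem FourPointCond.adj_of_lt_of_le_sup'_of_inf'_le {f : V → ℝ} (hf : FourPointCond G f)
    {u v : V} (huv : f u < f v) (hu : f v ≤ (closedNbhd G u).sup' (closedNbhd_nonempty u) f)
    (hv : (closedNbhd G v).inf' (closedNbhd_nonempty v) f ≤ f u) : G.Adj u v := by
  obtain ⟨y, hy, hvy⟩ := (le_sup'_iff _).mp hu
  obtain ⟨x, hx, hxu⟩ := (inf'_le_iff _).mp hv
  obtain rfl | huy := mem_closedNbhd.mp hy
  · exact absurd huv hvy.not_gt
  obtain rfl | hvx := mem_closedNbhd.mp hx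
  · exact absurd huv hxu.not_gt
  exact hf.adj_of_le_of_lt_of_le hxu huv hvy hvx.symm huy

theorem FourPointCond.isAND1Real {f : V → ℝ} (hf : FourPointCond G f) :
    IsAND1Real G (fun v => (closedNbhd G v).inf' (closedNbhd_nonempty v) f)
      (fun v => (closedNbhd G v).sup' (closedNbhd_nonempty v) f) f := by
  refine ⟨fun v => ⟨inf'_le f (self_mem_closedNbhd v), le_sup' f (self_mem_closedNbhd v)⟩,
    fun u v hne => ⟨fun huv => ?_, fun ⟨hLu, hRu, hLv, hRv⟩ => ?_⟩⟩
  · have hv : v ∈ closedNbhd G u := mem_closedNbhd.mpr (.inr huv)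
    have hu : u ∈ closedNbhd G v := mem_closedNbhd.mpr (.inr huv.symm)
    exact ⟨inf'_le f hv, le_sup' f hv, inf'_le f hu, le_sup' f hu⟩
  rcases (hf.1.ne hne).lt_or_gt with huv | hvu
  · exact hf.adj_of_lt_of_le_sup'_of_inf'_le huv hRu hLv
  · exact (hf.adj_of_lt_of_le_sup'_of_inf'_le hvu hRv hLu).symm

end Hull

end

/-- A finite graph admits an `AND(1)`-realization iff some linear ordering of
its vertices satisfies the four point condition. -/
theorem and1_iff_fourPoint {V : Type*} [Fintype V] (G : SimpleGraph V) :
    InAND1 G ↔ ∃ f : V → ℝ, FourPointCond G f := by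
  classical
  exact ⟨fun ⟨_, _, _, h⟩ => h.exists_fourPointCond, fun ⟨f, hf⟩ => ⟨_, _, f, hf.isAND1Real⟩⟩
end

section
/- A graph G admits an AND(d)-realization if and only if G is the intersection graph of boxes in 2d-dimensional Euclidean space where each box is a Cartesian product over i = 1,...,d of products [p_i, R_i] × [−p_i, −L_i] with 0 < L_i ≤ p_i ≤ R_i. -/
/-- An `AND(d)`-realization of `G`: each vertex `v` gets a `d`-dimensional box
`∏ᵢ [L v i, R v i]` and a representative point `p v` in it; distinct vertices
are adjacent iff each box contains the representative point of the other. -/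
def IsANDReal {V : Type*} (G : SimpleGraph V) (d : ℕ)
    (L R p : V → Fin d → ℝ) : Prop :=
  (∀ v i, L v i ≤ p v i ∧ p v i ≤ R v i) ∧
    ∀ u v : V, u ≠ v →
      (G.Adj u v ↔ ∀ i,
        L u i ≤ p v i ∧ p v i ≤ R u i ∧ L v i ≤ p u i ∧ p u i ≤ R v i)

/-- The box `∏_{i=1}^d ([pᵢ, Rᵢ] × [-pᵢ, -Lᵢ])` in `2d`-dimensional space
(realized as `(ℝ × ℝ)^d`). -/
def cornerBox (d : ℕ) (L R p : Fin d → ℝ) : Set (Fin d → ℝ × ℝ) :=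
  {x | ∀ i, p i ≤ (x i).1 ∧ (x i).1 ≤ R i ∧ -p i ≤ (x i).2 ∧ (x i).2 ≤ -L i}

lemma cornerBox_inter_nonempty {d : ℕ} {L R p L' R' p' : Fin d → ℝ}
    (h : ∀ i, L i ≤ p i ∧ p i ≤ R i) (h' : ∀ i, L' i ≤ p' i ∧ p' i ≤ R' i) :
    (cornerBox d L R p ∩ cornerBox d L' R' p').Nonempty ↔
      ∀ i, L i ≤ p' i ∧ p' i ≤ R i ∧ L' i ≤ p i ∧ p i ≤ R' i := by
  constructor
  · rintro ⟨x, hx, hx'⟩ i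
    obtain ⟨a1, a2, a3, a4⟩ := hx i
    obtain ⟨b1, b2, b3, b4⟩ := hx' i
    refine ⟨by linarith, by linarith, by linarith, by linarith⟩
  · intro hall
    refine ⟨fun i => (max (p i) (p' i), max (-p i) (-p' i)), fun i => ?_, fun i => ?_⟩
    · obtain ⟨c1, c2, c3, c4⟩ := hall i
      obtain ⟨d1, d2⟩ := h i
      obtain ⟨e1, e2⟩ := h' i
      exact ⟨le_max_left _ _, max_le d2 c2, le_max_left _ _,
        max_le (by linarith) (by linarith)⟩
    · obtain ⟨c1, c2, c3, c4⟩ := hall i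
      obtain ⟨d1, d2⟩ := h i
      obtain ⟨e1, e2⟩ := h' i
      exact ⟨le_max_right _ _, max_le c4 e2, le_max_right _ _,
        max_le (by linarith) (by linarith)⟩

/-- A graph belongs to `AND(d)` iff it is the intersection graph of boxes in
`2d`-dimensional Euclidean space of the form `∏ᵢ ([pᵢ, Rᵢ] × [-pᵢ, -Lᵢ])` with
`0 < Lᵢ ≤ pᵢ ≤ Rᵢ` for every `i`. -/
theorem andD_iff_cornerBox_intersection {V : Type*} [Fintype V]
    (G : SimpleGraph V) (d : ℕ) :
    (∃ L R p : V → Fin d → ℝ, IsANDReal G d L R p) ↔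
      ∃ L R p : V → Fin d → ℝ,
        (∀ v i, 0 < L v i ∧ L v i ≤ p v i ∧ p v i ≤ R v i) ∧
        ∀ u v : V, u ≠ v →
          (G.Adj u v ↔ (cornerBox d (L u) (R u) (p u) ∩
            cornerBox d (L v) (R v) (p v)).Nonempty) := by
  constructor
  · rintro ⟨L, R, p, hmem, hadj⟩
    obtain ⟨M, hM⟩ := Finite.exists_le (fun vi : V × Fin d => -L vi.1 vi.2)
    set C : ℝ := M + 1 with hC
    refine ⟨fun v i => L v i + C, fun v i => R v i + C, fun v i => p v i + C,
      fun v i => ?_, fun u v huv => ?_⟩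
    · have := hM (v, i)
      obtain ⟨h1, h2⟩ := hmem v i
      refine ⟨?_, ?_, ?_⟩ <;> dsimp only <;> linarith
    · rw [hadj u v huv,
        cornerBox_inter_nonempty
          (fun i => ⟨by dsimp only; linarith [(hmem u i).1], by dsimp only; linarith [(hmem u i).2]⟩)
          (fun i => ⟨by dsimp only; linarith [(hmem v i).1], by dsimp only; linarith [(hmem v i).2]⟩)]
      constructor
      · intro h i; obtain ⟨a1, a2, a3, a4⟩ := h i
        refine ⟨?_, ?_, ?_, ?_⟩ <;> dsimp only <;> linarith
      · intro h i; obtain ⟨a1, a2, a3, a4⟩ := h i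
        dsimp only at a1 a2 a3 a4
        refine ⟨?_, ?_, ?_, ?_⟩ <;> linarith
  · rintro ⟨L, R, p, hmem, hadj⟩
    refine ⟨L, R, p, fun v i => ⟨(hmem v i).2.1, (hmem v i).2.2⟩, fun u v huv => ?_⟩
    rw [hadj u v huv,
      cornerBox_inter_nonempty (fun i => ⟨(hmem u i).2.1, (hmem u i).2.2⟩)
        (fun i => ⟨(hmem v i).2.1, (hmem v i).2.2⟩)]
end

section
/- A graph belongs to AND(1) if and only if it is the intersection graph of a finite family of axis-parallel rectangles in the plane each of whose lower-left corner lies on the line x + y = 0. -/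
lemma rect_inter_nonempty_iff (au bu cu eu av bv cv ev : ℝ) :
    ((Set.Icc au bu ×ˢ Set.Icc cu eu) ∩ (Set.Icc av bv ×ˢ Set.Icc cv ev)).Nonempty ↔
      max au av ≤ min bu bv ∧ max cu cv ≤ min eu ev := by
  rw [Set.prod_inter_prod, Set.prod_nonempty_iff, Set.Icc_inter_Icc,
    Set.Icc_inter_Icc, Set.nonempty_Icc, Set.nonempty_Icc]

/-- A graph belongs to `AND(1)` iff it is the intersection graph of a family of
axis-parallel rectangles `[a,b] × [c,e]` in the plane, each of whose lower-left
corner `(a, c)` lies on the line `x + y = 0`. -/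
theorem and1_iff_rectangles_on_diagonal {V : Type*} [Fintype V]
    (G : SimpleGraph V) :
    InAND1 G ↔
      ∃ a b c e : V → ℝ,
        (∀ v, a v ≤ b v ∧ c v ≤ e v ∧ a v + c v = 0) ∧
        ∀ u v : V, u ≠ v →
          (G.Adj u v ↔
            ((Set.Icc (a u) (b u) ×ˢ Set.Icc (c u) (e u)) ∩
              (Set.Icc (a v) (b v) ×ˢ Set.Icc (c v) (e v))).Nonempty) := by
  constructor
  · rintro ⟨L, R, p, hin, hadj⟩
    refine ⟨p, R, fun v => -p v, fun v => -L v,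
      fun v => ⟨(hin v).2, by show -p v ≤ -L v; linarith [(hin v).1], by show p v + -p v = 0; ring⟩,
      fun u v huv => ?_⟩
    rw [hadj u v huv, rect_inter_nonempty_iff]
    simp only [max_le_iff, le_min_iff, and_assoc]
    have hu1 := (hin u).1; have hu2 := (hin u).2
    have hv1 := (hin v).1; have hv2 := (hin v).2
    constructor
    · rintro ⟨h1, h2, h3, h4⟩
      refine ⟨?_, ?_, ?_, ?_, ?_, ?_, ?_, ?_⟩ <;> linarith
    · rintro ⟨h1, h2, h3, h4, h5, h6, h7, h8⟩
      refine ⟨?_, ?_, ?_, ?_⟩ <;> linarith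
  · rintro ⟨a, b, c, e, hgeom, hadj⟩
    refine ⟨fun v => -(e v), b, a, ⟨fun v => ?_, fun u v huv => ?_⟩⟩
    · obtain ⟨h1, h2, h3⟩ := hgeom v
      exact ⟨by show -(e v) ≤ a v; linarith, h1⟩
    · rw [hadj u v huv, rect_inter_nonempty_iff]
      simp only [max_le_iff, le_min_iff, and_assoc]
      obtain ⟨hu1, hu2, hu3⟩ := hgeom u
      obtain ⟨hv1, hv2, hv3⟩ := hgeom v
      constructor
      · rintro ⟨h1, h2, h3, h4, h5, h6, h7, h8⟩
        refine ⟨?_, ?_, ?_, ?_⟩ <;> linarith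
      · rintro ⟨h1, h2, h3, h4⟩
        refine ⟨?_, ?_, ?_, ?_, ?_, ?_, ?_, ?_⟩ <;> linarith
end

section
/- Every graph in c-AND(1) is a max-tolerance graph, i.e., is the intersection graph of a family of isosceles axis-parallel right triangles (lower-left halves of squares) in the plane. -/
/-- The isosceles axis-parallel right triangle (lower-left half of a square)
with corner `(a, b)` and legs of length `s`. -/
def cornerTriangle (a b s : ℝ) : Set (ℝ × ℝ) :=
  {q | a ≤ q.1 ∧ b ≤ q.2 ∧ q.1 + q.2 ≤ a + b + s}

lemma triangle_inter_iff (a1 b1 s1 a2 b2 s2 : ℝ) :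
    (cornerTriangle a1 b1 s1 ∩ cornerTriangle a2 b2 s2).Nonempty ↔
      max a1 a2 + max b1 b2 ≤ min (a1 + b1 + s1) (a2 + b2 + s2) := by
  constructor
  · rintro ⟨q, ⟨h1, h2, h3⟩, ⟨h4, h5, h6⟩⟩
    have : max a1 a2 ≤ q.1 := max_le h1 h4
    have : max b1 b2 ≤ q.2 := max_le h2 h5
    have : q.1 + q.2 ≤ min (a1 + b1 + s1) (a2 + b2 + s2) := le_min h3 h6
    simp only [le_min_iff] at *
    constructor <;> nlinarith [le_max_left a1 a2, le_max_left b1 b2]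
  · intro hle
    refine ⟨(max a1 a2, max b1 b2), ⟨le_max_left _ _, le_max_left _ _, ?_⟩,
      ⟨le_max_right _ _, le_max_right _ _, ?_⟩⟩
    · exact hle.trans (min_le_left _ _)
    · exact hle.trans (min_le_right _ _)

lemma exists_eps {V : Type*} [Fintype V] (p r : V → ℝ) :
    ∃ ε > (0:ℝ), ∀ u v : V, |p v - p u| ≤ r u + ε → |p v - p u| ≤ r u := by
  classical
  set S : Finset (V × V) :=
    Finset.univ.filter (fun q => r q.1 < |p q.2 - p q.1|) with hS
  by_cases hne : S.Nonempty
  · set ε := (S.inf' hne (fun q => |p q.2 - p q.1| - r q.1)) / 2 with hε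
    have hpos : 0 < ε := by
      have : 0 < S.inf' hne (fun q => |p q.2 - p q.1| - r q.1) := by
        apply (Finset.lt_inf'_iff hne).2
        intro q hq
        have := (Finset.mem_filter.1 hq).2
        linarith
      linarith
    refine ⟨ε, hpos, fun u v hle => ?_⟩
    by_contra hlt
    push_neg at hlt
    have hmem : (u, v) ∈ S := Finset.mem_filter.2 ⟨Finset.mem_univ _, hlt⟩
    have := Finset.inf'_le (fun q => |p q.2 - p q.1| - r q.1) hmem
    simp only at this
    linarith
  · refine ⟨1, one_pos, fun u v _ => ?_⟩
    by_contra hlt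
    push_neg at hlt
    exact hne ⟨(u, v), Finset.mem_filter.2 ⟨Finset.mem_univ _, hlt⟩⟩

/-- Every graph in `c-AND(1)` is a max-tolerance graph, i.e. the intersection
graph of a family of isosceles axis-parallel right triangles. -/
theorem cand1_subset_maxTolerance {V : Type*} [Fintype V] (G : SimpleGraph V)
    (h : InCAND1 G) :
    ∃ a b s : V → ℝ, (∀ v, 0 < s v) ∧
      ∀ u v : V, u ≠ v →
        (G.Adj u v ↔
          (cornerTriangle (a u) (b u) (s u) ∩
            cornerTriangle (a v) (b v) (s v)).Nonempty) := by
  obtain ⟨L, R, p, ⟨⟨hmem, hadj⟩, hc⟩⟩ := h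
  set r : V → ℝ := fun v => (R v - L v) / 2 with hr
  have hrnn : ∀ v, 0 ≤ r v := fun v => by
    have h1 := (hmem v).1; have h2 := (hmem v).2
    simp only [hr]; linarith
  have hL : ∀ v, L v = p v - r v := fun v => by
    have := hc v; simp only [hr]; linarith
  have hR : ∀ v, R v = p v + r v := fun v => by
    have := hc v; simp only [hr]; linarith
  obtain ⟨ε, hεpos, hsep⟩ := exists_eps p r
  refine ⟨p, fun v => -(r v + ε), fun v => r v + ε,
    fun v => by have := hrnn v; show (0:ℝ) < r v + ε; linarith, fun u v huv => ?_⟩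
  rw [hadj u v huv, triangle_inter_iff]
  have hkey : (L u ≤ p v ∧ p v ≤ R u ∧ L v ≤ p u ∧ p u ≤ R v) ↔
      (|p v - p u| ≤ r u ∧ |p u - p v| ≤ r v) := by
    rw [hL, hR, hL, hR, abs_le, abs_le]
    constructor
    · rintro ⟨h1, h2, h3, h4⟩
      exact ⟨⟨by linarith, by linarith⟩, by linarith, by linarith⟩
    · rintro ⟨⟨h1, h2⟩, h3, h4⟩
      exact ⟨by linarith, by linarith, by linarith, by linarith⟩
  rw [hkey]
  have hc1 : p u + -(r u + ε) + (r u + ε) = p u := by ring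
  have hc2 : p v + -(r v + ε) + (r v + ε) = p v := by ring
  rw [hc1, hc2]
  constructor
  · rintro ⟨h1, h2⟩
    rw [abs_le] at h1 h2
    rw [le_min_iff]
    rcases max_cases (p u) (p v) with ⟨he, _⟩ | ⟨he, _⟩ <;>
      rcases max_cases (-(r u + ε)) (-(r v + ε)) with ⟨he2, _⟩ | ⟨he2, _⟩ <;>
      rw [he, he2] <;> constructor <;> linarith
  · intro hle
    have h1 : p v + max (-(r u + ε)) (-(r v + ε)) ≤ p u :=
      le_trans (by have := le_max_right (p u) (p v); linarith) (hle.trans (min_le_left _ _))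
    have h2 : p u + max (-(r u + ε)) (-(r v + ε)) ≤ p v :=
      le_trans (by have := le_max_left (p u) (p v); linarith) (hle.trans (min_le_right _ _))
    have h3 := le_max_left (-(r u + ε)) (-(r v + ε))
    have h4 := le_max_right (-(r u + ε)) (-(r v + ε))
    constructor
    · apply hsep
      rw [abs_le]; constructor <;> linarith
    · apply hsep
      rw [abs_le]; constructor <;> linarith
end

section
/- Every rooted directed path graph admits a linear ordering of its vertices satisfying the four point condition for AND(1); hence every rooted directed path graph belongs to AND(1). -/
/-- The set of vertices lying on the (unique) path between `s` and `t` in a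
tree, described via the graph metric. -/
def treePathSet {K : Type*} (T : SimpleGraph K) (s t : K) : Set K :=
  {k | T.dist s k + T.dist k t = T.dist s t}


open SimpleGraph Finset in
private lemma RDP.dist_getVert_le {K : Type*} {T : SimpleGraph K} (hc : T.Connected) {a b : K}
    (w : T.Walk a b) {i j : ℕ} (hij : i ≤ j) (hj : j ≤ w.length) :
    T.dist (w.getVert i) (w.getVert j) ≤ j - i := by
  induction j, hij using Nat.le_induction with
  | base => simp [SimpleGraph.dist_self]
  | succ j hij ih =>
    have hjl : j < w.length := by omega
    have h1 : T.dist (w.getVert j) (w.getVert (j + 1)) = 1 :=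
      SimpleGraph.dist_eq_one_iff_adj.mpr (w.adj_getVert_succ hjl)
    have h2 := ih (by omega)
    have h3 := hc.dist_triangle (u := w.getVert i) (v := w.getVert j) (w := w.getVert (j + 1))
    omega

private lemma RDP.tele_sum {N r0 : ℝ} (hNr : N * r0 = 1) (m d : ℕ) (hmd : m ≤ d) :
    ∑ i ∈ Finset.Ico m d, (N - 1) * r0 ^ (i + 1) = r0 ^ m - r0 ^ d := by
  induction d, hmd using Nat.le_induction with
  | base => simp
  | succ d hmd ih =>
    rw [Finset.sum_Ico_succ_top hmd, ih]
    have h1 : N * r0 ^ (d + 1) = r0 ^ d := by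
      have : r0 ^ (d + 1) = r0 * r0 ^ d := by ring
      rw [this, ← mul_assoc, hNr, one_mul]
    have h2 : (N - 1) * r0 ^ (d + 1) = r0 ^ d - r0 ^ (d + 1) := by
      rw [sub_mul, one_mul, h1]
    linarith

/-- Every rooted directed path graph (the intersection graph of directed paths
in a tree rooted at `r`, each path going from an ancestor `s v` down to a
descendant `t v`) admits a linear ordering satisfying the four point condition
for `AND(1)`; hence it belongs to `AND(1)`. -/
theorem rootedDirectedPath_fourPoint_and_and1 {V K : Type*} [Fintype V]
    [Fintype K] (G : SimpleGraph V) (T : SimpleGraph K) (hT : T.IsTree)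
    (r : K) (s t : V → K)
    (hdown : ∀ v, T.dist r (s v) + T.dist (s v) (t v) = T.dist r (t v))
    (hadj : ∀ u v : V, u ≠ v →
      (G.Adj u v ↔ (treePathSet T (s u) (t u) ∩ treePathSet T (s v) (t v)).Nonempty)) :
    (∃ f : V → ℝ, FourPointCond G f) ∧ InAND1 G := by
  classical
  have hc : T.Connected := hT.isConnected
  choose pth hpP hpL using fun k => hc.exists_path_of_dist r k
  let d : K → ℕ := fun k => T.dist r k
  let A : K → K → Prop := fun a b => T.dist r a + T.dist a b = T.dist r b
  have Arefl : ∀ a, A a a := fun a => by simp [A, SimpleGraph.dist_self]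
  have Adep : ∀ {a b}, A a b → d a ≤ d b := by
    intro a b h; simp only [A] at h; simp only [d]; omega
  have Atrans : ∀ {a b c}, A a b → A b c → A a c := by
    intro a b c hab hbc
    have t1 := hc.dist_triangle (u := r) (v := a) (w := c)
    have t2 := hc.dist_triangle (u := a) (v := b) (w := c)
    simp only [A] at *; omega
  have Aeq : ∀ {a b}, A a b → d a = d b → a = b := by
    intro a b h hdep
    simp only [A] at h; simp only [d] at hdep
    exact hc.dist_eq_zero_iff.mp (by omega)
  have prefix_of : ∀ {a b}, A a b → ∀ i, i ≤ d a →
      (pth b).getVert i = (pth a).getVert i := by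
    intro a b hab i hi
    obtain ⟨w2, hw2⟩ := (hc a b).exists_walk_length_eq_dist
    have hq : ((pth a).append w2).IsPath := by
      apply SimpleGraph.Walk.isPath_of_length_eq_dist
      rw [SimpleGraph.Walk.length_append, hpL a, hw2]; exact hab
    have hEq : pth b = (pth a).append w2 := (hT.existsUnique_path r b).unique (hpP b) hq
    rw [hEq, SimpleGraph.Walk.getVert_append]
    by_cases h' : i < (pth a).length
    · rw [if_pos h']
    · have h1 : i = (pth a).length := by
        simp only [d] at hi; rw [hpL a] at h' ⊢; omega
      subst h1
      simp
  have anc_of_prefix : ∀ {a b}, d a ≤ d b →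
      (∀ i, i ≤ d a → (pth b).getVert i = (pth a).getVert i) → A a b := by
    intro a b hdep hpre
    have ha : (pth b).getVert (d a) = a := by
      rw [hpre (d a) le_rfl]
      have := SimpleGraph.Walk.getVert_length (pth a)
      rw [hpL a] at this; exact this
    have hb : (pth b).getVert (d b) = b := by
      have := SimpleGraph.Walk.getVert_length (pth b)
      rw [hpL b] at this; exact this
    have hdist : T.dist a b ≤ d b - d a := by
      have := RDP.dist_getVert_le hc (pth b) (i := d a) (j := d b) hdep (by rw [hpL b])
      rwa [ha, hb] at this
    have t1 := hc.dist_triangle (u := r) (v := a) (w := b)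
    simp only [A]; simp only [d] at *; omega
  have Acomp : ∀ {a b c}, A a c → A b c → d a ≤ d b → A a b := by
    intro a b c hac hbc hdep
    refine anc_of_prefix hdep fun i hi => ?_
    rw [← prefix_of hbc i (le_trans hi hdep), prefix_of hac i hi]
  have memPS : ∀ {s' t' k : K}, A s' t' → (k ∈ treePathSet T s' t' ↔ A s' k ∧ A k t') := by
    intro s' t' k hst
    have t1 := hc.dist_triangle (u := r) (v := s') (w := k)
    have t2 := hc.dist_triangle (u := r) (v := k) (w := t')
    simp only [treePathSet, Set.mem_setOf_eq, A] at *
    omega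
  have interCrit : ∀ u v : V,
      ((treePathSet T (s u) (t u)) ∩ treePathSet T (s v) (t v)).Nonempty ↔
        (A (s u) (t v) ∧ A (s v) (t u)) := by
    intro u v
    constructor
    · rintro ⟨k, hk1, hk2⟩
      rw [memPS (hdown u)] at hk1
      rw [memPS (hdown v)] at hk2
      exact ⟨Atrans hk1.1 hk2.2, Atrans hk2.1 hk1.2⟩
    · rintro ⟨h1, h2⟩
      rcases le_total (d (s u)) (d (s v)) with hle | hle
      · exact ⟨s v, (memPS (hdown u)).mpr ⟨Acomp (hdown u) h2 hle, h2⟩,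
          (memPS (hdown v)).mpr ⟨Arefl _, hdown v⟩⟩
      · exact ⟨s u, (memPS (hdown u)).mpr ⟨Arefl _, hdown u⟩,
          (memPS (hdown v)).mpr ⟨Acomp (hdown v) h1 hle, h1⟩⟩

  -- real encoding
  set n := Fintype.card K with hn_def
  have hn : 0 < n := Fintype.card_pos_iff.mpr ⟨r⟩
  set N : ℝ := (n : ℝ) + 1 with hN_def
  set r0 : ℝ := N⁻¹ with hr0_def
  have hNpos : (0 : ℝ) < N := by positivity
  have hr0pos : 0 < r0 := inv_pos.mpr hNpos
  have hr0le : r0 ≤ 1 := by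
    rw [hr0_def]
    apply inv_le_one_of_one_le₀
    have : (1 : ℝ) ≤ (n : ℝ) := by exact_mod_cast hn
    linarith
  have hNr : N * r0 = 1 := mul_inv_cancel₀ (ne_of_gt hNpos)
  let e : K → ℕ := fun k => (Fintype.equivFin K k : ℕ)
  have he_lt : ∀ k, e k < n := fun k => (Fintype.equivFin K k).isLt
  have he_inj : Function.Injective e := fun a b h =>
    (Fintype.equivFin K).injective (Fin.ext h)
  let c : K → ℕ → ℝ := fun k i => ((e ((pth k).getVert i) + 1 : ℕ) : ℝ)
  have hc1 : ∀ k i, 1 ≤ c k i := by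
    intro k i
    simp only [c]
    exact_mod_cast Nat.succ_le_succ (Nat.zero_le _)
  have hcN : ∀ k i, c k i ≤ N - 1 := by
    intro k i
    simp only [c, hN_def]
    have := he_lt ((pth k).getVert i)
    have : ((e ((pth k).getVert i) + 1 : ℕ) : ℝ) ≤ (n : ℝ) := by exact_mod_cast this
    linarith
  let xk : K → ℝ := fun k => ∑ i ∈ Finset.range (d k), c k (i + 1) * r0 ^ (i + 1)
  have term_nonneg : ∀ k i, 0 ≤ c k (i + 1) * r0 ^ (i + 1) := fun k i =>
    mul_nonneg (le_trans zero_le_one (hc1 k _)) (pow_nonneg hr0pos.le _)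
  have sum_le : ∀ (k : K) (m dd : ℕ), m ≤ dd →
      ∑ i ∈ Finset.Ico m dd, c k (i + 1) * r0 ^ (i + 1) ≤ r0 ^ m - r0 ^ dd := by
    intro k m dd h
    calc ∑ i ∈ Finset.Ico m dd, c k (i + 1) * r0 ^ (i + 1)
        ≤ ∑ i ∈ Finset.Ico m dd, (N - 1) * r0 ^ (i + 1) :=
          Finset.sum_le_sum fun i _ =>
            mul_le_mul_of_nonneg_right (hcN k _) (pow_nonneg hr0pos.le _)
      _ = r0 ^ m - r0 ^ dd := RDP.tele_sum hNr m dd h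
  have sum_nonneg' : ∀ (k : K) (m dd : ℕ),
      0 ≤ ∑ i ∈ Finset.Ico m dd, c k (i + 1) * r0 ^ (i + 1) := fun k m dd =>
    Finset.sum_nonneg fun i _ => term_nonneg k i
  have sum_ge : ∀ (k : K) (m dd : ℕ), m < dd →
      r0 ^ dd ≤ ∑ i ∈ Finset.Ico m dd, c k (i + 1) * r0 ^ (i + 1) := by
    intro k m dd h
    have h1 : r0 ^ dd ≤ c k (m + 1) * r0 ^ (m + 1) := by
      have hp : r0 ^ dd ≤ r0 ^ (m + 1) := pow_le_pow_of_le_one hr0pos.le hr0le h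
      nlinarith [hc1 k (m + 1), pow_nonneg hr0pos.le (m + 1)]
    refine le_trans h1 (Finset.single_le_sum (fun i _ => term_nonneg k i) ?_)
    simp [Finset.mem_Ico]; omega
  have hdD : ∀ k, d k < n := by
    intro k
    have := (hpP k).length_lt
    rw [hpL k] at this
    exact this
  set dl : ℝ := r0 ^ n with hdl_def
  have hdlpos : 0 < dl := pow_pos hr0pos n
  have pow_ge_dl : ∀ {m : ℕ}, m ≤ n → dl ≤ r0 ^ m := fun h =>
    pow_le_pow_of_le_one hr0pos.le hr0le h
  have xsplit : ∀ {a b}, A a b →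
      xk b = xk a + ∑ i ∈ Finset.Ico (d a) (d b), c b (i + 1) * r0 ^ (i + 1) := by
    intro a b hab
    have hdep := Adep hab
    have h1 : xk a = ∑ i ∈ Finset.Ico 0 (d a), c b (i + 1) * r0 ^ (i + 1) := by
      rw [← Finset.range_eq_Ico]
      refine Finset.sum_congr rfl fun i hi => ?_
      rw [Finset.mem_range] at hi
      have : (pth b).getVert (i + 1) = (pth a).getVert (i + 1) :=
        prefix_of hab (i + 1) (by omega)
      simp only [c, this]
    have h2 : xk b = ∑ i ∈ Finset.Ico 0 (d b), c b (i + 1) * r0 ^ (i + 1) := by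
      rw [← Finset.range_eq_Ico]
    rw [h2, ← Finset.sum_Ico_consecutive _ (Nat.zero_le (d a)) hdep, ← h1]
  have xA : ∀ {a b}, A a b →
      xk a ≤ xk b ∧ xk b ≤ xk a + r0 ^ (d a) - r0 ^ (d b) ∧
        (a ≠ b → xk a + dl ≤ xk b) := by
    intro a b hab
    have hdep := Adep hab
    have hs := xsplit hab
    refine ⟨by linarith [sum_nonneg' b (d a) (d b)], by linarith [sum_le b (d a) (d b) hdep], ?_⟩
    intro hne
    have hlt : d a < d b := lt_of_le_of_ne hdep fun h => hne (Aeq hab h)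
    have := sum_ge b (d a) (d b) hlt
    have hge : dl ≤ r0 ^ (d b) := pow_ge_dl (le_of_lt (hdD b))
    linarith
  have xB : ∀ {a b}, ¬ A a b → ¬ A b a →
      (xk a + r0 ^ (d a) ≤ xk b ∨ xk b + dl ≤ xk a) := by
    intro a b hnab hnba
    have hmm : ∃ j, j ≤ min (d a) (d b) ∧ (pth a).getVert j ≠ (pth b).getVert j := by
      by_contra hcon
      push_neg at hcon
      rcases le_total (d a) (d b) with h | h
      · exact hnab (anc_of_prefix h fun i hi => (hcon i (by omega)).symm)
      · exact hnba (anc_of_prefix h fun i hi => hcon i (by omega))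
    obtain ⟨hjle, hjne⟩ := Nat.find_spec hmm
    have hjmin : ∀ i, i < Nat.find hmm → (pth a).getVert i = (pth b).getVert i := by
      intro i hi
      have h := Nat.find_min hmm hi
      push_neg at h
      exact h (by omega)
    have hj0 : Nat.find hmm ≠ 0 := by
      intro h0
      apply hjne
      rw [h0]
      simp [SimpleGraph.Walk.getVert_zero]
    obtain ⟨m, hm⟩ : ∃ m, Nat.find hmm = m + 1 := ⟨Nat.find hmm - 1, by omega⟩
    rw [hm] at hjle hjne
    have hma : m + 1 ≤ d a := by omega
    have hmb : m + 1 ≤ d b := by omega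
    have hS : ∑ i ∈ Finset.range m, c a (i + 1) * r0 ^ (i + 1)
        = ∑ i ∈ Finset.range m, c b (i + 1) * r0 ^ (i + 1) := by
      refine Finset.sum_congr rfl fun i hi => ?_
      rw [Finset.mem_range] at hi
      have : (pth a).getVert (i + 1) = (pth b).getVert (i + 1) := by
        apply hjmin; omega
      simp only [c, this]
    set S : ℝ := ∑ i ∈ Finset.range m, c a (i + 1) * r0 ^ (i + 1) with hS_def
    have hxa : xk a = S + c a (m + 1) * r0 ^ (m + 1)
        + ∑ i ∈ Finset.Ico (m + 1) (d a), c a (i + 1) * r0 ^ (i + 1) := by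
      show (∑ i ∈ Finset.range (d a), c a (i + 1) * r0 ^ (i + 1)) = _
      rw [Finset.range_eq_Ico, ← Finset.sum_Ico_consecutive _ (Nat.zero_le m) (by omega : m ≤ d a),
        Finset.sum_eq_sum_Ico_succ_bot (by omega : m < d a)]
      rw [hS_def, Finset.range_eq_Ico]
      ring
    have hxb : xk b = S + c b (m + 1) * r0 ^ (m + 1)
        + ∑ i ∈ Finset.Ico (m + 1) (d b), c b (i + 1) * r0 ^ (i + 1) := by
      show (∑ i ∈ Finset.range (d b), c b (i + 1) * r0 ^ (i + 1)) = _
      rw [Finset.range_eq_Ico, ← Finset.sum_Ico_consecutive _ (Nat.zero_le m) (by omega : m ≤ d b),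
        Finset.sum_eq_sum_Ico_succ_bot (by omega : m < d b)]
      rw [← Finset.range_eq_Ico, ← hS]
      ring
    have hcne : e ((pth a).getVert (m + 1)) ≠ e ((pth b).getVert (m + 1)) :=
      fun h => hjne (he_inj h)
    have hta1 := sum_le a (m + 1) (d a) hma
    have hta0 := sum_nonneg' a (m + 1) (d a)
    have htb1 := sum_le b (m + 1) (d b) hmb
    have htb0 := sum_nonneg' b (m + 1) (d b)
    rcases lt_or_gt_of_ne hcne with hlt | hlt
    · left
      have hcc : c a (m + 1) + 1 ≤ c b (m + 1) := by
        simp only [c]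
        exact_mod_cast Nat.succ_le_of_lt (Nat.succ_lt_succ hlt)
      have hpw := pow_nonneg hr0pos.le (m + 1)
      nlinarith
    · right
      have hcc : c b (m + 1) + 1 ≤ c a (m + 1) := by
        simp only [c]
        exact_mod_cast Nat.succ_le_of_lt (Nat.succ_lt_succ hlt)
      have hge : dl ≤ r0 ^ (d b) := pow_ge_dl (le_of_lt (hdD b))
      have hpw := pow_nonneg hr0pos.le (m + 1)
      nlinarith
  have xgap : ∀ {a b}, a ≠ b → (xk a + dl ≤ xk b ∨ xk b + dl ≤ xk a) := by
    intro a b hne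
    by_cases hab : A a b
    · exact Or.inl ((xA hab).2.2 hne)
    · by_cases hba : A b a
      · exact Or.inr ((xA hba).2.2 hne.symm)
      · rcases xB hab hba with h | h
        · left
          have : dl ≤ r0 ^ (d a) := pow_ge_dl (le_of_lt (hdD a))
          linarith
        · exact Or.inr h
  have memX : ∀ (a b : K) (ep : ℝ), 0 ≤ ep → ep < dl / 2 →
      (A a b ↔ (xk a ≤ xk b + ep ∧ xk b + ep ≤ xk a + r0 ^ (d a) - dl / 2)) := by
    intro a b ep hep0 hep1
    constructor
    · intro hab
      obtain ⟨h1, h2, _⟩ := xA hab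
      have hge : dl ≤ r0 ^ (d b) := pow_ge_dl (le_of_lt (hdD b))
      constructor <;> linarith
    · rintro ⟨h1, h2⟩
      by_contra hnab
      by_cases hba : A b a
      · have hne : a ≠ b := fun h => hnab (h ▸ Arefl a)
        have := (xA hba).2.2 hne.symm
        linarith
      · rcases xB hnab hba with h | h
        · linarith
        · linarith

  -- the V-side data
  set mV := Fintype.card V with hmV_def
  let eV : V → ℕ := fun v => (Fintype.equivFin V v : ℕ)
  have heV_inj : Function.Injective eV := fun a b h =>
    (Fintype.equivFin V).injective (Fin.ext h)
  let ep : V → ℝ := fun v => (eV v : ℝ) * dl / (2 * ((mV : ℝ) + 1))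
  have hmVpos : (0:ℝ) < 2 * ((mV : ℝ) + 1) := by positivity
  have hep0 : ∀ v, 0 ≤ ep v := by
    intro v
    have : (0:ℝ) ≤ (eV v : ℝ) := Nat.cast_nonneg _
    have := hdlpos
    positivity
  have hep1 : ∀ v, ep v < dl / 2 := by
    intro v
    have h1 : (eV v : ℝ) < (mV : ℝ) + 1 := by
      have := (Fintype.equivFin V v).isLt
      exact_mod_cast Nat.lt_succ_of_lt this
    rw [div_lt_div_iff₀ hmVpos (by norm_num : (0:ℝ) < 2)]
    nlinarith
  have hep_inj : ∀ u v, ep u = ep v → u = v := by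
    intro u v h
    apply heV_inj
    simp only [ep] at h
    have h5 := congrArg (· * (2 * ((mV : ℝ) + 1))) h
    simp only [div_mul_cancel₀ _ (ne_of_gt hmVpos)] at h5
    have h4 : (eV u : ℝ) = eV v := mul_right_cancel₀ (ne_of_gt hdlpos) h5
    exact_mod_cast h4
  let L : V → ℝ := fun v => xk (s v)
  let R : V → ℝ := fun v => xk (s v) + r0 ^ (d (s v)) - dl / 2
  let p : V → ℝ := fun v => xk (t v) + ep v
  have hreal : IsAND1Real G L R p := by
    refine ⟨fun v => (memX (s v) (t v) (ep v) (hep0 v) (hep1 v)).mp (hdown v),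
      fun u v huv => ?_⟩
    rw [hadj u v huv, interCrit u v,
      memX (s u) (t v) (ep v) (hep0 v) (hep1 v),
      memX (s v) (t u) (ep u) (hep0 u) (hep1 u)]
    constructor
    · rintro ⟨⟨a1, a2⟩, b1, b2⟩
      exact ⟨a1, a2, b1, b2⟩
    · rintro ⟨a1, a2, b1, b2⟩
      exact ⟨⟨a1, a2⟩, b1, b2⟩
  have hpinj : Function.Injective p := by
    intro u v h
    by_cases htv : t u = t v
    · apply hep_inj
      have hx : xk (t u) = xk (t v) := by rw [htv]
      simp only [p] at h
      linarith
    · exfalso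
      have h1 := hep0 u
      have h2 := hep0 v
      have h3 := hep1 u
      have h4 := hep1 v
      simp only [p] at h
      rcases xgap htv with hg | hg <;> linarith
  refine ⟨⟨p, hpinj, ?_⟩, L, R, p, hreal⟩
  intro a u v b h1 h2 h3 hav hub
  have huv : u ≠ v := fun h => absurd h2 (by rw [h]; exact lt_irrefl _)
  obtain ⟨c1, c2, c3, c4⟩ := (hreal.2 a v hav.ne).mp hav
  obtain ⟨d1, d2, d3, d4⟩ := (hreal.2 u b hub.ne).mp hub
  obtain ⟨e1, e2⟩ := hreal.1 u
  obtain ⟨f1, f2⟩ := hreal.1 v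
  exact (hreal.2 u v huv).mpr ⟨by linarith, by linarith, by linarith, by linarith⟩
end

section
/- If a linear order < on the vertices of a graph G satisfies the four point condition, then setting p_v to the rank of v and B_v = [min over the closed neighborhood of v of rank, max over the closed neighborhood of v of rank] yields an AND(1)-realization of G; in particular, G is in AND(1) with a realization in which all representative points are the integers 1 through n and each interval endpoint is the representative point of a vertex. -/
/-- If a linear order (given by an enumeration `e` of the vertices, vertex `v`
getting rank `e v + 1 ∈ {1, …, n}`) satisfies the four point condition, then
setting `p v` to the rank of `v` and `B v = [min over N[v] of rank, max over
N[v] of rank]` yields an `AND(1)`-realization of `G`; in particular the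
representative points are the integers `1` through `n` and all interval
endpoints are representative points of vertices. -/
theorem fourPoint_explicit_realization {V : Type*} [Fintype V] [DecidableEq V]
    (G : SimpleGraph V) [DecidableRel G.Adj]
    (e : V ≃ Fin (Fintype.card V))
    (h : FourPointCond G (fun v => ((e v : ℕ) : ℝ) + 1)) :
    IsAND1Real G
      (fun v => (insert v (G.neighborFinset v)).inf'
        (Finset.insert_nonempty _ _) (fun w => ((e w : ℕ) : ℝ) + 1))
      (fun v => (insert v (G.neighborFinset v)).sup'
        (Finset.insert_nonempty _ _) (fun w => ((e w : ℕ) : ℝ) + 1))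
      (fun v => ((e v : ℕ) : ℝ) + 1) := by
  obtain ⟨hinj, h4⟩ := h
  set f : V → ℝ := fun v => ((e v : ℕ) : ℝ) + 1 with hf
  have hmem : ∀ u v : V, v ∈ insert u (G.neighborFinset u) ↔ v = u ∨ G.Adj u v := by
    intro u v
    simp [SimpleGraph.mem_neighborFinset]
  constructor
  · intro v
    constructor
    · exact Finset.inf'_le _ (Finset.mem_insert_self _ _)
    · exact Finset.le_sup' _ (Finset.mem_insert_self _ _)
  · intro u v huv
    constructor
    · intro hadj
      have hvu : v ∈ insert u (G.neighborFinset u) := (hmem u v).2 (Or.inr hadj)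
      have huv' : u ∈ insert v (G.neighborFinset v) := (hmem v u).2 (Or.inr hadj.symm)
      exact ⟨Finset.inf'_le _ hvu, Finset.le_sup' _ hvu,
        Finset.inf'_le _ huv', Finset.le_sup' _ huv'⟩
    · rintro ⟨h1, h2, h3, h4'⟩
      -- WLOG f u < f v
      have key : ∀ a b : V, a ≠ b → f a < f b →
          ((insert b (G.neighborFinset b)).inf' (Finset.insert_nonempty _ _) f ≤ f a) →
          (f b ≤ (insert a (G.neighborFinset a)).sup' (Finset.insert_nonempty _ _) f) →
          G.Adj a b := by
        intro a b hab hfab hL hR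
        obtain ⟨x, hx, hxle⟩ := (Finset.inf'_le_iff (Finset.insert_nonempty _ _)).1 hL
        obtain ⟨y, hy, hyle⟩ := (Finset.le_sup'_iff (Finset.insert_nonempty _ _)).1 hR
        rcases (hmem b x).1 hx with hxb | hxadj
        · exact absurd (hxb ▸ hxle) (not_le.2 hfab)
        rcases (hmem a y).1 hy with hya | hyadj
        · exact absurd (hya ▸ hyle) (not_le.2 hfab)
        rcases eq_or_lt_of_le hxle with hxa | hxa
        · exact (hinj hxa ▸ hxadj).symm
        rcases eq_or_lt_of_le hyle with hyb | hyb
        · exact hinj hyb.symm ▸ hyadj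
        exact h4 x a b y hxa hfab hyb hxadj.symm hyadj
      rcases lt_trichotomy (f u) (f v) with hlt | heq | hgt
      · exact key u v huv hlt h3 h2
      · exact absurd (hinj heq) huv
      · exact (key v u huv.symm hgt h1 h4').symm
end

section
/- If G is a graph in which every pair of vertices has at least two non-adjacent common neighbors, then G does not belong to AND(1). -/
/-- If every pair of vertices of `G` has at least two non-adjacent common
neighbors, then `G` does not belong to `AND(1)`. -/
theorem not_and1_of_common_neighbors {V : Type*} [Fintype V] [Nonempty V]
    (G : SimpleGraph V)
    (h : ∀ u v : V, ∃ w₁ w₂ : V, w₁ ≠ w₂ ∧ ¬G.Adj w₁ w₂ ∧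
      G.Adj u w₁ ∧ G.Adj u w₂ ∧ G.Adj v w₁ ∧ G.Adj v w₂) :
    ¬ InAND1 G := by
  rintro ⟨L, R, p, hin, hadj⟩
  obtain ⟨x, -, hx⟩ := Finset.exists_max_image Finset.univ p ⟨Classical.arbitrary V, Finset.mem_univ _⟩
  obtain ⟨y, -, hy⟩ := Finset.exists_min_image Finset.univ p ⟨Classical.arbitrary V, Finset.mem_univ _⟩
  obtain ⟨w₁, w₂, hne, hnadj, hxw₁, hxw₂, hyw₁, hyw₂⟩ := h x y
  have key : ∀ w w' : V, G.Adj x w → G.Adj y w → L w ≤ p w' ∧ p w' ≤ R w := by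
    intro w w' hxw hyw
    have h1 := (hadj x w hxw.ne).mp hxw
    have h2 := (hadj y w hyw.ne).mp hyw
    exact ⟨h2.2.2.1.trans (hy w' (Finset.mem_univ _)),
      (hx w' (Finset.mem_univ _)).trans h1.2.2.2⟩
  obtain ⟨a1, a2⟩ := key w₁ w₂ hxw₁ hyw₁
  obtain ⟨b1, b2⟩ := key w₂ w₁ hxw₂ hyw₂
  exact hnadj ((hadj w₁ w₂ hne).mpr ⟨a1, a2, b1, b2⟩)
end

section
/- Every interval graph belongs to c-AND(1). -/
/-- `G` is an interval graph: the intersection graph of a family of closed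
intervals `[a v, b v]` on the real line. -/
def IsIntervalGraph {V : Type*} (G : SimpleGraph V) : Prop :=
  ∃ a b : V → ℝ, (∀ v, a v ≤ b v) ∧
    ∀ u v : V, u ≠ v →
      (G.Adj u v ↔ (Set.Icc (a u) (b u) ∩ Set.Icc (a v) (b v)).Nonempty)

/-- Every interval graph belongs to `c-AND(1)`. -/
theorem intervalGraph_mem_cand1 {V : Type*} [Fintype V] (G : SimpleGraph V)
    (h : IsIntervalGraph G) : InCAND1 G := by
  classical
  obtain ⟨a, b, hab, hadj⟩ := h
  set E : Finset ℝ := Finset.image a Finset.univ ∪ Finset.image b Finset.univ with hE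
  set g : ℝ → ℝ := fun x => 3 ^ (E.filter (fun e => e ≤ x)).card with hg
  have hgpos : ∀ x, 0 < g x := fun x => by positivity
  have hgmono : ∀ x y, x ≤ y → g x ≤ g y := by
    intro x y hxy
    apply pow_le_pow_right₀ (by norm_num)
    apply Finset.card_le_card
    intro e he
    simp only [Finset.mem_filter] at *
    exact ⟨he.1, he.2.trans hxy⟩
  have hgsep : ∀ x y, y ∈ E → x < y → 3 * g x ≤ g y := by
    intro x y hy hxy
    have hss : E.filter (fun e => e ≤ x) ⊂ E.filter (fun e => e ≤ y) := by
      constructor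
      · intro e he
        simp only [Finset.mem_filter] at *
        exact ⟨he.1, he.2.trans hxy.le⟩
      · intro hc
        have := hc (Finset.mem_filter.mpr ⟨hy, le_refl y⟩)
        simp only [Finset.mem_filter] at this
        exact absurd this.2 (not_le.mpr hxy)
    have hcard : (E.filter (fun e => e ≤ x)).card + 1 ≤ (E.filter (fun e => e ≤ y)).card :=
      Finset.card_lt_card hss
    calc 3 * g x = 3 ^ ((E.filter (fun e => e ≤ x)).card + 1) := by
          rw [pow_succ]; ring
      _ ≤ 3 ^ (E.filter (fun e => e ≤ y)).card := pow_le_pow_right₀ (by norm_num) hcard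
      _ = g y := rfl
  have haE : ∀ v, a v ∈ E := fun v =>
    Finset.mem_union_left _ (Finset.mem_image_of_mem a (Finset.mem_univ v))
  have hbE : ∀ v, b v ∈ E := fun v =>
    Finset.mem_union_right _ (Finset.mem_image_of_mem b (Finset.mem_univ v))
  refine ⟨fun v => g (a v) - g (b v), fun v => g (a v) + g (b v), fun v => g (a v),
    ⟨fun v => ⟨by beta_reduce; linarith [hgpos (b v)], by beta_reduce; linarith [hgpos (b v)]⟩, ?_⟩, fun v => by ring⟩
  intro u v huv
  beta_reduce
  rw [hadj u v huv, Set.Icc_inter_Icc, Set.nonempty_Icc]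
  constructor
  · intro hmm
    have h1 : a u ≤ b v := le_trans (le_max_left _ _) (hmm.trans (min_le_right _ _))
    have h2 : a v ≤ b u := le_trans (le_max_right _ _) (hmm.trans (min_le_left _ _))
    refine ⟨?_, ?_, ?_, ?_⟩
    · have := hgmono _ _ (hab u)
      linarith [hgpos (a v)]
    · have := hgmono _ _ h2
      linarith [hgpos (a u)]
    · have := hgmono _ _ (hab v)
      linarith [hgpos (a u)]
    · have := hgmono _ _ h1
      linarith [hgpos (a v)]
  · rintro ⟨h1, h2, h3, h4⟩
    have hvu : a v ≤ b u := by
      by_contra hc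
      push_neg at hc
      have hs := hgsep (b u) (a v) (haE v) hc
      have h5 := hgmono _ _ (hab u)
      linarith [hgpos (b u)]
    have huv' : a u ≤ b v := by
      by_contra hc
      push_neg at hc
      have hs := hgsep (b v) (a u) (haE u) hc
      have h5 := hgmono _ _ (hab v)
      linarith [hgpos (b v)]
    exact max_le (le_min (hab u) huv') (le_min hvu (hab v))
end

section
/- Every cycle C_n (n ≥ 3) belongs to c-AND(1). -/
/-- Integer representative point (everything scaled by 2): vertex `i` sits at `2i+2`. -/
def pz {n : ℕ} (i : Fin n) : ℤ := 2 * i.val + 2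

/-- Integer left endpoint. -/
def Lz (n : ℕ) (i : Fin n) : ℤ :=
  if i.val = 0 then 3 - 2 * n else if i.val + 1 = n then 1 else 2 * i.val - 1

/-- Integer right endpoint. -/
def Rz (n : ℕ) (i : Fin n) : ℤ :=
  if i.val = 0 then 2 * n + 1 else if i.val + 1 = n then 4 * n - 1 else 2 * i.val + 5

lemma sumz (n : ℕ) (i : Fin n) : Lz n i + Rz n i = 2 * pz i := by
  unfold Lz Rz pz
  split_ifs <;> omega

lemma memz (n : ℕ) (hn : 3 ≤ n) (i : Fin n) : Lz n i ≤ pz i ∧ pz i ≤ Rz n i := by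
  have := i.isLt
  unfold Lz Rz pz
  split_ifs <;> omega

lemma mod_one (n a b : ℕ) (hn : 2 ≤ n) (ha : a < n) (hb : b < n) :
    (n - b + a) % n = 1 ↔ (a = b + 1 ∨ (a = 0 ∧ b + 1 = n)) := by
  rcases le_or_gt b a with h | h
  · rw [show n - b + a = (a - b) + n by omega, Nat.add_mod_right,
      Nat.mod_eq_of_lt (by omega)]
    constructor <;> intro h2 <;> omega
  · rw [Nat.mod_eq_of_lt (by omega)]
    constructor <;> intro h2 <;> omega

lemma adj_iff (n : ℕ) (hn : 3 ≤ n) (u v : Fin n) :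
    (SimpleGraph.cycleGraph n).Adj u v ↔
      (u.val + 1 = v.val ∨ v.val + 1 = u.val ∨
        (u.val = 0 ∧ v.val + 1 = n) ∨ (v.val = 0 ∧ u.val + 1 = n)) := by
  rw [SimpleGraph.cycleGraph_adj', Fin.sub_def, Fin.sub_def]
  simp only [Fin.val_mk]
  rw [mod_one n u.val v.val (by omega) u.isLt v.isLt, mod_one n v.val u.val (by omega) v.isLt u.isLt]
  omega

/-- Every cycle `Cₙ` (`n ≥ 3`) belongs to `c-AND(1)`. -/
theorem cycle_mem_cand1 (n : ℕ) (hn : 3 ≤ n) :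
    InCAND1 (SimpleGraph.cycleGraph n) := by
  refine ⟨fun i => ((Lz n i : ℤ) : ℝ), fun i => ((Rz n i : ℤ) : ℝ),
    fun i => ((pz i : ℤ) : ℝ), ⟨?_, ?_⟩, ?_⟩
  · intro v
    have h := memz n hn v
    constructor
    · show ((Lz n v : ℤ) : ℝ) ≤ ((pz v : ℤ) : ℝ)
      exact_mod_cast h.1
    · show ((pz v : ℤ) : ℝ) ≤ ((Rz n v : ℤ) : ℝ)
      exact_mod_cast h.2
  · intro u v huv
    rw [adj_iff n hn u v]
    simp only [Int.cast_le]
    have hu := u.isLt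
    have hv := v.isLt
    have hne : u.val ≠ v.val := fun h => huv (Fin.ext h)
    unfold Lz Rz pz
    split_ifs <;> (constructor <;> intro h2 <;> omega)
  · intro v
    have := sumz n v
    have : ((Lz n v : ℤ) : ℝ) + ((Rz n v : ℤ) : ℝ) = 2 * ((pz v : ℤ) : ℝ) := by
      exact_mod_cast this
    linarith
end

section
/- In any AND(1)-realization of a cycle C_n, there is a cyclic labeling l : V → {1,...,n} following the cycle (clockwise or anticlockwise) such that the vertex labeled 1 is first and the vertex labeled n is last in the order of representative points, and for every vertex u, |l(u) − π(u)| ≤ 1, where π(u) is the rank of u in the order of representative points. If moreover the realization is a c-AND(1)-realization (each representative is the center of its interval), then l(u) = π(u) for all u. -/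
open SimpleGraph

section FourPoint

variable {V W α β : Type*}

-- `FourPointCond` without injectivity and with values in any order, e.g. ranks in `Fin n`.
def IsFourPointOrder [LT α] (G : SimpleGraph V) (f : V → α) : Prop :=
  ∀ x u v y, f x < f u → f u < f v → f v < f y → G.Adj x v → G.Adj u y → G.Adj u v

def IsCentralFourPointOrder [LT α] (G : SimpleGraph V) (f : V → α) : Prop :=
  ∀ x u v y, f x < f u → f u < f v → f v < f y → G.Adj x v → G.Adj u y → G.Adj x u ∨ G.Adj v y

theorem IsAND1Real.isFourPointOrder {G : SimpleGraph V} {L R p : V → ℝ}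
    (h : IsAND1Real G L R p) : IsFourPointOrder G p := by
  intro x u v y hxu huv hvy hxv huy
  obtain ⟨hmem, hadj⟩ := h
  rw [hadj x v (by rintro rfl; linarith)] at hxv
  rw [hadj u y (by rintro rfl; linarith)] at huy
  rw [hadj u v (by rintro rfl; linarith)]
  have := hmem u; have := hmem v
  exact ⟨by linarith, by linarith, by linarith, by linarith⟩

theorem IsCAND1Real.isCentralFourPointOrder {G : SimpleGraph V} {L R p : V → ℝ}
    (h : IsCAND1Real G L R p) : IsCentralFourPointOrder G p := by
  intro x u v y hxu huv hvy hxv huy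
  obtain ⟨⟨hmem, hadj⟩, hmid⟩ := h
  rw [hadj x v (by rintro rfl; linarith)] at hxv
  rw [hadj u y (by rintro rfl; linarith)] at huy
  rw [hadj x u (by rintro rfl; linarith), hadj v y (by rintro rfl; linarith)]
  rcases le_or_gt (L u) (p x) with hLu | hLu
  · exact .inl ⟨by linarith [hmem x], by linarith, hLu, by linarith⟩
  rcases le_or_gt (p y) (R v) with hRv | hRv
  · exact .inr ⟨by linarith, hRv, by linarith, by linarith [hmem y]⟩
  -- by centring, `p x < L u = 2 p u - R u ≤ 2 p u - p y` and `2 p v - p x ≤ R v < p y`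
  linarith [hmid u, hmid v]

theorem IsFourPointOrder.of_iso [LT α] [LT β] {G : SimpleGraph V} {H : SimpleGraph W}
    {f : V → α} {g : W → β} (hf : IsFourPointOrder G f) (σ : H ≃g G)
    (hfg : ∀ u v, g u < g v ↔ f (σ u) < f (σ v)) : IsFourPointOrder H g := by
  intro x u v y hxu huv hvy hxv huy
  simp only [hfg, ← σ.map_adj_iff] at *
  exact hf _ _ _ _ hxu huv hvy hxv huy

theorem IsCentralFourPointOrder.of_iso [LT α] [LT β] {G : SimpleGraph V} {H : SimpleGraph W}
    {f : V → α} {g : W → β} (hf : IsCentralFourPointOrder G f) (σ : H ≃g G)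
    (hfg : ∀ u v, g u < g v ↔ f (σ u) < f (σ v)) : IsCentralFourPointOrder H g := by
  intro x u v y hxu huv hvy hxv huy
  simp only [hfg, ← σ.map_adj_iff] at *
  exact hf _ _ _ _ hxu huv hvy hxv huy

end FourPoint

theorem Fin.exists_consecutive_lt_le {α : Type*} [LinearOrder α] {n : ℕ} (g : Fin n → α) {c : α}
    {a b : Fin n} (hab : a ≤ b) (ha : g a < c) (hb : c ≤ g b) :
    ∃ i j : Fin n, a ≤ i ∧ j ≤ b ∧ (j : ℕ) = i + 1 ∧ g i < c ∧ c ≤ g j := by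
  classical
  set S := Finset.univ.filter fun i => i ≤ b ∧ g i < c
  have haS : a ∈ S := by simp [S, hab, ha]
  obtain ⟨i, hiS, hmax⟩ : ∃ i ∈ S, ∀ j ∈ S, j ≤ i :=
    ⟨S.max' ⟨a, haS⟩, S.max'_mem _, fun j hj => S.le_max' j hj⟩
  simp only [S, Finset.mem_filter, Finset.mem_univ, true_and] at hiS hmax
  have hib : i < b := lt_of_le_of_ne hiS.1 (by rintro rfl; exact (hb.trans_lt hiS.2).false)
  refine ⟨i, ⟨i + 1, by omega⟩, hmax a ⟨hab, ha⟩, Fin.mk_le_of_le_val (by omega), rfl, hiS.2, ?_⟩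
  by_contra! hj
  have := hmax ⟨i + 1, by omega⟩ ⟨Fin.mk_le_of_le_val (by omega), hj⟩
  rw [Fin.le_def, Fin.val_mk] at this
  omega

theorem Fin.val_neg_one' (n : ℕ) [NeZero n] : ((-1 : Fin n) : ℕ) = n - 1 := by
  obtain ⟨m, rfl⟩ := Nat.exists_eq_succ_of_ne_zero (NeZero.ne n)
  simp [Fin.coe_neg_one]

theorem Fin.val_one_of_two_le {n : ℕ} [NeZero n] (hn : 2 ≤ n) : ((1 : Fin n) : ℕ) = 1 := by
  rw [Fin.val_one', Nat.mod_eq_of_lt hn]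

namespace SimpleGraph

theorem cycleGraph_adj_iff_val {n : ℕ} (hn : 2 ≤ n) {a b : Fin n} :
    (cycleGraph n).Adj a b ↔ (a : ℕ) + 1 = b ∨ (b : ℕ) + 1 = a ∨
      ((a : ℕ) = 0 ∧ (b : ℕ) + 1 = n) ∨ ((b : ℕ) = 0 ∧ (a : ℕ) + 1 = n) := by
  rw [cycleGraph_adj']
  rcases lt_trichotomy a b with h | rfl | h
  · rw [Fin.coe_sub_iff_lt.2 h, Fin.sub_val_of_le h.le]; omega
  · rw [Fin.sub_val_of_le le_rfl]; omega
  · rw [Fin.sub_val_of_le h.le, Fin.coe_sub_iff_lt.2 h]; omega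

def cycleGraph.addLeftIso {n : ℕ} [NeZero n] (v : Fin n) : cycleGraph n ≃g cycleGraph n where
  toEquiv := Equiv.addLeft v
  map_rel_iff' := by simp [cycleGraph_adj']

def cycleGraph.subLeftIso {n : ℕ} [NeZero n] (v : Fin n) : cycleGraph n ≃g cycleGraph n where
  toEquiv := Equiv.subLeft v
  map_rel_iff' := by simp [cycleGraph_adj', or_comm]

theorem cycleGraph.exists_iso_apply_zero_eq_and_one_lt {n : ℕ} [NeZero n] (hn : 3 ≤ n)
    (π : Fin n ≃ Fin n) :
    ∃ σ : cycleGraph n ≃g cycleGraph n, π (σ 0) = 0 ∧ π (σ 1) < π (σ (-1)) := by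
  obtain ⟨v, hv⟩ := π.surjective 0
  have hne : π (v + 1) ≠ π (v - 1) := by
    rw [π.injective.ne_iff, sub_eq_add_neg, Ne, add_right_inj, Fin.ext_iff,
      Fin.val_one_of_two_le (by omega), Fin.val_neg_one']
    omega
  rcases hne.lt_or_gt with h | h
  · exact ⟨addLeftIso v, by simp [addLeftIso, hv], by simpa [addLeftIso, sub_eq_add_neg] using h⟩
  · exact ⟨subLeftIso v, by simp [subLeftIso, hv], by simpa [subLeftIso] using h⟩

end SimpleGraph

namespace CycleLabeling

open SimpleGraph

variable {n : ℕ}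

-- `r : Fin n ≃ Fin n` sends the label of a vertex of `Cₙ` to its rank, and `PreservesPrefix r k`
-- says that the vertices labelled `0, …, k - 1` are the first `k` in rank.
def PreservesPrefix (r : Fin n ≃ Fin n) (k : ℕ) : Prop :=
  ∀ i, (r i : ℕ) < k ↔ (i : ℕ) < k

theorem preservesPrefix_zero (r : Fin n ≃ Fin n) : PreservesPrefix r 0 := by
  intro i; omega

theorem preservesPrefix_of_le {k : ℕ} (r : Fin n ≃ Fin n) (hk : n ≤ k) : PreservesPrefix r k := by
  intro i; omega

theorem val_apply_eq_val_apply_iff (r : Fin n ≃ Fin n) (i j : Fin n) :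
    (r i : ℕ) = r j ↔ (i : ℕ) = j := by
  rw [← Fin.ext_iff, ← Fin.ext_iff, r.apply_eq_iff_eq]

theorem PreservesPrefix.succ {r : Fin n ≃ Fin n} {k : ℕ} (hk : PreservesPrefix r k) {b : Fin n}
    (hb : (b : ℕ) = k) (hrb : r b = b) : PreservesPrefix r (k + 1) := by
  intro i
  have := hk i
  have := val_apply_eq_val_apply_iff r i b
  have := congrArg Fin.val hrb
  omega

theorem PreservesPrefix.add_two {r : Fin n ≃ Fin n} {k : ℕ} (hk : PreservesPrefix r k)
    {b c : Fin n} (hb : (b : ℕ) = k) (hc : (c : ℕ) = k + 1) (hbc : r b = c) (hcb : r c = b) :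
    PreservesPrefix r (k + 2) := by
  intro i
  have := hk i
  have := val_apply_eq_val_apply_iff r i b
  have := val_apply_eq_val_apply_iff r i c
  have := congrArg Fin.val hbc
  have := congrArg Fin.val hcb
  omega

variable [NeZero n]

theorem apply_neg_one_eq_neg_one (hn : 3 ≤ n) {r : Fin n ≃ Fin n}
    (hr : IsFourPointOrder (cycleGraph n) r) (h0 : r 0 = 0) (horient : r 1 < r (-1)) :
    r (-1) = -1 := by
  have hv0 := Fin.val_zero n
  have hv1 : ((1 : Fin n) : ℕ) = 1 := Fin.val_one_of_two_le (by omega)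
  have hvl := Fin.val_neg_one' n
  have hr0 := congrArg Fin.val h0
  by_contra hne
  rw [Fin.ext_iff, hvl] at hne
  obtain ⟨t, ht⟩ := r.surjective (-1)
  rw [Fin.ext_iff, hvl] at ht
  have := val_apply_eq_val_apply_iff r t 0
  have := val_apply_eq_val_apply_iff r t (-1)
  obtain ⟨i, j, hi1, hjt, hij, hi, hj⟩ :=
    Fin.exists_consecutive_lt_le r (a := 1) (b := t) (by omega) horient (by omega)
  have := val_apply_eq_val_apply_iff r i 0
  have := val_apply_eq_val_apply_iff r j (-1)
  have := hr 0 i (-1) j (by omega) hi (by omega)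
    ((cycleGraph_adj_iff_val (by omega)).2 (by omega))
    ((cycleGraph_adj_iff_val (by omega)).2 (by omega))
  rw [cycleGraph_adj_iff_val (by omega)] at this
  omega

theorem PreservesPrefix.apply_eq_or_swap {r : Fin n ≃ Fin n}
    (hr : IsFourPointOrder (cycleGraph n) r) (hlast : r (-1) = -1) {k : ℕ}
    (hk : PreservesPrefix r k) (hk1 : 1 ≤ k) {b : Fin n} (hb : (b : ℕ) = k) :
    r b = b ∨ ∃ c : Fin n, (c : ℕ) = k + 1 ∧ r b = c ∧ r c = b := by
  have hn : 2 ≤ n := by omega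
  have hvl := Fin.val_neg_one' n
  have hrl := congrArg Fin.val hlast
  have hkb : k ≤ (r b : ℕ) := by have := hk b; omega
  rcases hkb.eq_or_lt with hkb | hkb
  · exact .inl (Fin.ext (by omega))
  right
  obtain ⟨a, ha⟩ : ∃ a : Fin n, (a : ℕ) = k - 1 := ⟨⟨k - 1, by omega⟩, rfl⟩
  have hab : (cycleGraph n).Adj a b := (cycleGraph_adj_iff_val hn).2 (by omega)
  have := hk a
  have := val_apply_eq_val_apply_iff r b (-1)
  -- the labels from `k + 2` on form a path to the last position that may not jump over `r b`
  have far : ∀ i : Fin n, k + 2 ≤ (i : ℕ) → r b < r i := by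
    intro i hi
    have := val_apply_eq_val_apply_iff r i b
    by_contra! hib
    obtain ⟨j, j', hij, -, hjj', hj, hj'⟩ :=
      Fin.exists_consecutive_lt_le r (b := -1) (by omega) (by omega : r i < r b) (by omega)
    have := hk j
    have := val_apply_eq_val_apply_iff r j' b
    have := hr a j b j' (by omega) hj (by omega) hab ((cycleGraph_adj_iff_val hn).2 (by omega))
    rw [cycleGraph_adj_iff_val hn] at this
    omega
  have between : ∀ j : Fin n, k ≤ (r j : ℕ) → r j < r b → (j : ℕ) = k + 1 := by
    intro j hj hjb
    have := hk j
    have := far j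
    have := val_apply_eq_val_apply_iff r j b
    omega
  obtain ⟨c, hc⟩ := r.surjective ⟨k, by omega⟩
  obtain ⟨d, hd⟩ := r.surjective ⟨(r b : ℕ) - 1, by omega⟩
  simp only [Fin.ext_iff] at hc hd
  have hck := between c (by omega) (by omega)
  have hdk := between d (by omega) (by omega)
  have := val_apply_eq_val_apply_iff r c d
  exact ⟨c, hck, Fin.ext (by omega), Fin.ext (by omega)⟩

theorem preservesPrefix_or_succ {r : Fin n ≃ Fin n} (hr : IsFourPointOrder (cycleGraph n) r)
    (h0 : r 0 = 0) (hlast : r (-1) = -1) (k : ℕ) :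
    PreservesPrefix r k ∨ PreservesPrefix r (k + 1) := by
  induction k with
  | zero => exact .inl (preservesPrefix_zero r)
  | succ k ih =>
    rcases ih with hk | hk
    · rcases lt_or_ge k n with hkn | hkn
      · rcases Nat.eq_zero_or_pos k with rfl | hk1
        · exact .inl (hk.succ (Fin.val_zero n) h0)
        rcases hk.apply_eq_or_swap hr hlast hk1 (b := ⟨k, hkn⟩) rfl with h | ⟨c, hc, hbc, hcb⟩
        · exact .inl (hk.succ rfl h)
        · exact .inr (hk.add_two rfl hc hbc hcb)
      · exact .inl (preservesPrefix_of_le r (by omega))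
    · exact .inl hk

theorem PreservesPrefix.not_swap {r : Fin n ≃ Fin n}
    (hc : IsCentralFourPointOrder (cycleGraph n) r) (hlast : r (-1) = -1) {k : ℕ}
    (hk : PreservesPrefix r k) (hk1 : 1 ≤ k) {b c : Fin n} (hb : (b : ℕ) = k)
    (hc' : (c : ℕ) = k + 1) (hbc : r b = c) (hcb : r c = b) : False := by
  have hn : 2 ≤ n := by omega
  have hkn : k + 2 < n := by
    have := Fin.val_neg_one' n
    have := congrArg Fin.val hlast
    have := congrArg Fin.val hcb
    have := val_apply_eq_val_apply_iff r c (-1)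
    omega
  obtain ⟨a, ha⟩ : ∃ a : Fin n, (a : ℕ) = k - 1 := ⟨⟨k - 1, by omega⟩, rfl⟩
  obtain ⟨d, hd⟩ : ∃ d : Fin n, (d : ℕ) = k + 2 := ⟨⟨k + 2, hkn⟩, rfl⟩
  have := hk a
  have := hk.add_two hb hc' hbc hcb d
  have := congrArg Fin.val hbc
  have := congrArg Fin.val hcb
  have := hc a c b d (by omega) (by omega) (by omega)
    ((cycleGraph_adj_iff_val hn).2 (by omega)) ((cycleGraph_adj_iff_val hn).2 (by omega))
  rw [cycleGraph_adj_iff_val hn, cycleGraph_adj_iff_val hn] at this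
  omega

theorem apply_eq_self_of_central {r : Fin n ≃ Fin n} (hr : IsFourPointOrder (cycleGraph n) r)
    (hc : IsCentralFourPointOrder (cycleGraph n) r) (h0 : r 0 = 0) (hlast : r (-1) = -1)
    (i : Fin n) : r i = i := by
  have hP : ∀ k, PreservesPrefix r k := by
    intro k
    induction k with
    | zero => exact preservesPrefix_zero r
    | succ k hk =>
      rcases lt_or_ge k n with hkn | hkn
      · rcases Nat.eq_zero_or_pos k with rfl | hk1
        · exact hk.succ (Fin.val_zero n) h0
        rcases hk.apply_eq_or_swap hr hlast hk1 (b := ⟨k, hkn⟩) rfl with h | ⟨c, hc', hbc, hcb⟩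
        · exact hk.succ rfl h
        · exact (hk.not_swap hc hlast hk1 rfl hc' hbc hcb).elim
      · exact preservesPrefix_of_le r (by omega)
  have := hP i i
  have := hP (i + 1) i
  exact Fin.ext (by omega)

theorem apply_le_succ_and_le_succ_apply {r : Fin n ≃ Fin n}
    (hr : IsFourPointOrder (cycleGraph n) r) (h0 : r 0 = 0) (hlast : r (-1) = -1) (i : Fin n) :
    (r i : ℕ) ≤ i + 1 ∧ (i : ℕ) ≤ r i + 1 := by
  have hlo := (preservesPrefix_or_succ hr h0 hlast (i - 1)).imp (· i) (· i)
  have hhi := (preservesPrefix_or_succ hr h0 hlast (i + 1)).imp (· i) (· i)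
  omega

end CycleLabeling

/-- In any `AND(1)`-realization of the cycle `Cₙ` with distinct representative
points, there is a cyclic labeling of the vertices following the cycle
clockwise or anticlockwise (encoded as a graph automorphism `l` of `Cₙ`, the
label of `u` being `l u ∈ {0, …, n-1}`) such that the vertex labeled `0` is
first and the vertex labeled `n-1` is last in the order of representative
points (`π u` denoting the rank of `u` in that order), and `|l u - π u| ≤ 1`
for every vertex `u`.  If moreover the realization is a
`c-AND(1)`-realization, then `l u = π u` for every `u`. -/
theorem cycle_realization_labeling (n : ℕ) (hn : 3 ≤ n) (L R p : Fin n → ℝ)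
    (hreal : IsAND1Real (SimpleGraph.cycleGraph n) L R p)
    (π : Fin n ≃ Fin n) (hπ : ∀ u v : Fin n, π u < π v ↔ p u < p v) :
    ∃ l : SimpleGraph.cycleGraph n ≃g SimpleGraph.cycleGraph n,
      π (l.symm ⟨0, by omega⟩) = ⟨0, by omega⟩ ∧
      π (l.symm ⟨n - 1, by omega⟩) = ⟨n - 1, by omega⟩ ∧
      (∀ u : Fin n, ((l u : ℕ) : ℤ) - ((π u : ℕ) : ℤ) ≤ 1 ∧
        ((π u : ℕ) : ℤ) - ((l u : ℕ) : ℤ) ≤ 1) ∧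
      ((∀ v, p v = (L v + R v) / 2) → ∀ u, l u = π u) := by
  have : NeZero n := ⟨by omega⟩
  obtain ⟨σ, h0, horient⟩ := cycleGraph.exists_iso_apply_zero_eq_and_one_lt hn π
  set r : Fin n ≃ Fin n := σ.toEquiv.trans π
  have hord : ∀ u v, r u < r v ↔ p (σ u) < p (σ v) := fun u v => hπ (σ u) (σ v)
  have hr := hreal.isFourPointOrder.of_iso σ hord
  have hlast := CycleLabeling.apply_neg_one_eq_neg_one hn hr h0 horient
  have hr_symm : ∀ u, r (σ.symm u) = π u := fun u => congrArg π (σ.apply_symm_apply u)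
  have hzero : (⟨0, by omega⟩ : Fin n) = 0 := rfl
  have hneg : (⟨n - 1, by omega⟩ : Fin n) = -1 := Fin.ext (Fin.val_neg_one' n).symm
  refine ⟨σ.symm, by rw [hzero]; exact h0, by rw [hneg]; exact hlast, fun u => ?_,
    fun hcent u => ?_⟩
  · have := CycleLabeling.apply_le_succ_and_le_succ_apply hr h0 hlast (σ.symm u)
    rw [hr_symm] at this
    omega
  · have hc := (IsCAND1Real.isCentralFourPointOrder ⟨hreal, hcent⟩).of_iso σ hord
    rw [← CycleLabeling.apply_eq_self_of_central hr hc h0 hlast (σ.symm u), hr_symm]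
end

section
/- Let G_1, G_2 be graphs in AND(1) (respectively c-AND(1)), w_1 ∈ V(G_1), w_2 ∈ V(G_2), and suppose w_2 is safe in G_2. Then the graph G obtained by identifying w_1 and w_2 belongs to AND(1) (respectively c-AND(1)). -/
/-- A vertex `v` is safe in `G` (for `AND(1)`) if some `AND(1)`-realization of
`G` has `p v ∈ B w` only when `w = v` or `vw ∈ E(G)`. -/
def SafeAND1 {V : Type*} (G : SimpleGraph V) (v : V) : Prop :=
  ∃ L R p : V → ℝ, IsAND1Real G L R p ∧
    ∀ w, L w ≤ p v → p v ≤ R w → w = v ∨ G.Adj v w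

/-- A vertex `v` is safe in `G` (for `c-AND(1)`) if some
`c-AND(1)`-realization of `G` has `p v ∈ B w` only when `w = v` or
`vw ∈ E(G)`. -/
def SafeCAND1 {V : Type*} (G : SimpleGraph V) (v : V) : Prop :=
  ∃ L R p : V → ℝ, IsCAND1Real G L R p ∧
    ∀ w, L w ≤ p v → p v ≤ R w → w = v ∨ G.Adj v w

/-- The graph obtained from the disjoint union of `G₁` and `G₂` by identifying
the vertices `w₁ ∈ V(G₁)` and `w₂ ∈ V(G₂)` (the merged vertex is `inl w₁`). -/
def glueAt {V₁ V₂ : Type*} (G₁ : SimpleGraph V₁) (G₂ : SimpleGraph V₂)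
    (w₁ : V₁) (w₂ : V₂) : SimpleGraph (V₁ ⊕ {x : V₂ // x ≠ w₂}) where
  Adj a b := match a, b with
    | .inl u, .inl v => G₁.Adj u v
    | .inr u, .inr v => G₂.Adj u v
    | .inl u, .inr v => u = w₁ ∧ G₂.Adj w₂ v
    | .inr u, .inl v => v = w₁ ∧ G₂.Adj w₂ u
  symm := ⟨by
    rintro (u | u) (v | v) h <;> simp_all [SimpleGraph.adj_comm]⟩
  loopless := ⟨by rintro (u | u) h <;> simp_all⟩

/-!
Widen every interval of a realization of `G₁` a little and move the point of `w₁` off all other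
representative points: the failing containments of a finite realization fail by a positive margin,
so no adjacency changes, and afterwards a small window around `p w₁` lies inside `B w₁` and contains
no other representative point. An increasing affine map shrinks a safe realization of `G₂` into
this window, sending `p w₂` to `p w₁`. Then every point of the copy lies in `B w₁`, `p w₁` lies in
`B v` exactly when `v` is a neighbour of `w₂` (this is safety), and no other vertex of `G₁` sees the
window. All maps involved preserve midpoints, so the construction also works for `c-AND(1)`.
-/

open Filter Topology

theorem eventually_forall_lt_of_pos {α : Type*} [Finite α] (f : α → ℝ) :
    ∀ᶠ ε in 𝓝[>] (0 : ℝ), ∀ a, 0 < f a → ε < f a := by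
  refine eventually_all.2 fun a => ?_
  by_cases ha : 0 < f a
  · filter_upwards [nhdsWithin_le_nhds (eventually_lt_nhds ha)] with ε hε _ using hε
  · exact Eventually.of_forall fun _ h => absurd h ha

theorem exists_pos_of_eventually {P : ℝ → Prop} (h : ∀ᶠ ε in 𝓝[>] (0 : ℝ), P ε) :
    ∃ ε > 0, P ε :=
  (h.and self_mem_nhdsWithin).exists.imp fun _ ⟨hP, hε⟩ => ⟨hε, hP⟩

theorem exists_pos_forall_mul_le {V : Type*} [Finite V] (x y : V → ℝ) {δ : ℝ} (hδ : 0 < δ) :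
    ∃ a > 0, ∀ v, a * x v ≤ δ ∧ a * y v ≤ δ := by
  have small (z : ℝ) : ∀ᶠ a in 𝓝[>] (0 : ℝ), a * z ≤ δ :=
    nhdsWithin_le_nhds <| ((tendsto_id.mul_const z).eventually_lt_const (by simpa using hδ)).mono
      fun _ h => h.le
  exact exists_pos_of_eventually (eventually_all.2 fun v => (small (x v)).and (small (y v)))

def IsCentered {V : Type*} (L R p : V → ℝ) : Prop :=
  ∀ v, p v = (L v + R v) / 2

namespace IsAND1Real

variable {V : Type*} {G : SimpleGraph V} {L R p : V → ℝ}

theorem of_iff {L' R' p' : V → ℝ} (h : IsAND1Real G L R p)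
    (hL : ∀ u v, L' u ≤ p' v ↔ L u ≤ p v) (hR : ∀ u v, p' v ≤ R' u ↔ p v ≤ R u) :
    IsAND1Real G L' R' p' :=
  ⟨fun v => ⟨(hL v v).2 (h.1 v).1, (hR v v).2 (h.1 v).2⟩, fun u v huv => by
    rw [h.2 u v huv, hL, hR, hL, hR]⟩

theorem comp_strictMono (h : IsAND1Real G L R p) {φ : ℝ → ℝ} (hφ : StrictMono φ) :
    IsAND1Real G (φ ∘ L) (φ ∘ R) (φ ∘ p) :=
  h.of_iff (fun _ _ => hφ.le_iff_le) (fun _ _ => hφ.le_iff_le)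

theorem widen_translate (h : IsAND1Real G L R p) {η : ℝ}
    (hL : ∀ u v, p v < L u → η < L u - p v) (hR : ∀ u v, R u < p v → η < p v - R u)
    (d : V → ℝ) (hd : ∀ u v, |d u - d v| ≤ η / 2) :
    IsAND1Real G (fun v => L v - η / 2 + d v) (fun v => R v + η / 2 + d v)
      (fun v => p v + d v) := by
  refine h.of_iff (fun u v => ?_) (fun u v => ?_) <;> have := abs_le.1 (hd u v) <;>
    refine ⟨fun h' => ?_, fun h' => by linarith⟩ <;> by_contra hlt
  · linarith [hL u v (not_le.1 hlt)]
  · linarith [hR u v (not_le.1 hlt)]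

theorem exists_isolated [Finite V] (h : IsAND1Real G L R p) (w : V) :
    ∃ L' R' p' : V → ℝ, IsAND1Real G L' R' p' ∧ (IsCentered L R p → IsCentered L' R' p') ∧
      ∃ δ > 0, L' w ≤ p' w - δ ∧ p' w + δ ≤ R' w ∧ ∀ u ≠ w, δ < |p' u - p' w| := by
  classical
  obtain ⟨η, hη, hL, hR⟩ := exists_pos_of_eventually <|
    (eventually_forall_lt_of_pos fun x : V × V => L x.1 - p x.2).and
      (eventually_forall_lt_of_pos fun x : V × V => p x.2 - R x.1)
  obtain ⟨s, hs, hsη, hsp⟩ := exists_pos_of_eventually <|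
    ((eventually_le_nhds (half_pos hη)).filter_mono nhdsWithin_le_nhds).and
      (eventually_forall_lt_of_pos fun u => |p u - p w|)
  -- only `w` moves, by `s`, which is smaller than every nonzero distance `|p u - p w|`
  set d : V → ℝ := fun v => if v = w then s else 0
  have hd : ∀ u v, |d u - d v| ≤ η / 2 := fun u v => by
    simp only [d]; split_ifs <;> simp [abs_of_pos hs, hsη, (half_pos hη).le]
  have hne : ∀ u ≠ w, 0 < |p u + d u - (p w + d w)| := fun u hu => by
    simp only [d, if_pos rfl, if_neg hu, add_zero, abs_pos, sub_ne_zero]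
    intro heq
    have := hsp u
    rw [heq, add_sub_cancel_left, abs_of_pos hs] at this
    exact (this hs).false
  obtain ⟨δ, hδ, hδη, hδp⟩ := exists_pos_of_eventually <|
    ((eventually_le_nhds (half_pos hη)).filter_mono nhdsWithin_le_nhds).and
      (eventually_forall_lt_of_pos fun u => |p u + d u - (p w + d w)|)
  refine ⟨_, _, _, h.widen_translate (fun u v huv => hL (u, v) (sub_pos.2 huv))
    (fun u v huv => hR (u, v) (sub_pos.2 huv)) d hd,
    fun hc v => by simp only [hc v]; ring, δ, hδ, ?_, ?_, fun u hu => hδp u (hne u hu)⟩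
  · linarith [(h.1 w).1]
  · linarith [(h.1 w).2]

end IsAND1Real

section Glue

variable {V₁ V₂ : Type*} {G₁ : SimpleGraph V₁} {G₂ : SimpleGraph V₂} {w₁ : V₁} {w₂ : V₂}
  {L₁ R₁ p₁ : V₁ → ℝ} {L₂ R₂ p₂ : V₂ → ℝ}

theorem IsAND1Real.glueAt (h₁ : IsAND1Real G₁ L₁ R₁ p₁) (h₂ : IsAND1Real G₂ L₂ R₂ p₂)
    (hsafe : ∀ w, L₂ w ≤ p₂ w₂ → p₂ w₂ ≤ R₂ w → w = w₂ ∨ G₂.Adj w₂ w)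
    (hp : p₂ w₂ = p₁ w₁) (hin : ∀ v, L₁ w₁ ≤ p₂ v ∧ p₂ v ≤ R₁ w₁)
    (hout : ∀ u ≠ w₁, ∀ v, L₂ v ≤ p₁ u → p₁ u ≤ R₂ v → False) :
    IsAND1Real (glueAt G₁ G₂ w₁ w₂) (Sum.elim L₁ (L₂ ∘ Subtype.val))
      (Sum.elim R₁ (R₂ ∘ Subtype.val)) (Sum.elim p₁ (p₂ ∘ Subtype.val)) := by
  have mixed : ∀ u (v : {x // x ≠ w₂}), (u = w₁ ∧ G₂.Adj w₂ v) ↔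
      (L₁ u ≤ p₂ v ∧ p₂ v ≤ R₁ u) ∧ (L₂ v ≤ p₁ u ∧ p₁ u ≤ R₂ v) := by
    refine fun u v => ⟨?_, fun ⟨_, hL, hR⟩ => ?_⟩
    · rintro ⟨rfl, hadj⟩
      obtain ⟨-, -, hL, hR⟩ := (h₂.2 w₂ v (Ne.symm v.2)).1 hadj
      exact ⟨hin v, hp ▸ hL, hp ▸ hR⟩
    · obtain rfl : u = w₁ := by_contra fun hu => hout u hu v hL hR
      exact ⟨rfl, (hsafe v (hp ▸ hL) (hp ▸ hR)).resolve_left v.2⟩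
  refine ⟨Sum.rec h₁.1 fun v => h₂.1 v, ?_⟩
  rintro (u | u) (v | v) huv
  · exact h₁.2 u v (by simpa using huv)
  · exact (mixed u v).trans <| by
      simp only [Sum.elim_inl, Sum.elim_inr, Function.comp_apply, and_assoc]
  · exact (mixed v u).trans <| by
      simp only [Sum.elim_inl, Sum.elim_inr, Function.comp_apply]; tauto
  · exact h₂.2 u v (Subtype.val_injective.ne (by simpa using huv))

theorem exists_isAND1Real_glueAt [Finite V₁] [Finite V₂] (w₁ : V₁)
    (h₁ : IsAND1Real G₁ L₁ R₁ p₁) (h₂ : IsAND1Real G₂ L₂ R₂ p₂)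
    (hsafe : ∀ w, L₂ w ≤ p₂ w₂ → p₂ w₂ ≤ R₂ w → w = w₂ ∨ G₂.Adj w₂ w) :
    ∃ L R p, IsAND1Real (glueAt G₁ G₂ w₁ w₂) L R p ∧
      (IsCentered L₁ R₁ p₁ → IsCentered L₂ R₂ p₂ → IsCentered L R p) := by
  obtain ⟨L₁', R₁', p₁', h₁', hcen, δ, hδ, hLw, hRw, hiso⟩ := h₁.exists_isolated w₁
  obtain ⟨a, ha, hwin⟩ :=
    exists_pos_forall_mul_le (fun v => p₂ w₂ - L₂ v) (fun v => R₂ v - p₂ w₂) hδ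
  set φ : ℝ → ℝ := fun x => a * (x - p₂ w₂) + p₁' w₁
  have hφ : StrictMono φ := fun x y hxy => by simp only [φ]; nlinarith
  have hφL : ∀ v, p₁' w₁ - δ ≤ φ (L₂ v) := fun v => by simp only [φ]; linarith [(hwin v).1]
  have hφR : ∀ v, φ (R₂ v) ≤ p₁' w₁ + δ := fun v => by simp only [φ]; linarith [(hwin v).2]
  refine ⟨_, _, _, h₁'.glueAt (h₂.comp_strictMono hφ)
    (fun w hL hR => hsafe w (hφ.le_iff_le.1 hL) (hφ.le_iff_le.1 hR)) (by simp [φ])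
    (fun v => ⟨?_, ?_⟩) (fun u hu v hL hR => ?_), ?_⟩
  · change _ ≤ φ (p₂ v)
    linarith [hφL v, hφ.monotone (h₂.1 v).1]
  · change φ (p₂ v) ≤ _
    linarith [hφR v, hφ.monotone (h₂.1 v).2]
  · change φ (L₂ v) ≤ _ at hL
    change _ ≤ φ (R₂ v) at hR
    rcases lt_abs.1 (hiso u hu) with h | h <;> linarith [hφL v, hφR v]
  · rintro hc₁ hc₂ (u | v)
    · exact hcen hc₁ u
    · simp only [Sum.elim_inr, Function.comp_apply, φ, hc₂ v]
      ring

end Glue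

/-- Gluing two `AND(1)` (resp. `c-AND(1)`) graphs by identifying a vertex of
the first with a safe vertex of the second yields an `AND(1)`
(resp. `c-AND(1)`) graph. -/
theorem glue_mem_and1_cand1 {V₁ V₂ : Type*} [Fintype V₁] [Fintype V₂]
    (G₁ : SimpleGraph V₁) (G₂ : SimpleGraph V₂) (w₁ : V₁) (w₂ : V₂) :
    (InAND1 G₁ → SafeAND1 G₂ w₂ → InAND1 (glueAt G₁ G₂ w₁ w₂)) ∧
    (InCAND1 G₁ → SafeCAND1 G₂ w₂ → InCAND1 (glueAt G₁ G₂ w₁ w₂)) := by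
  constructor
  · rintro ⟨L₁, R₁, p₁, h₁⟩ ⟨L₂, R₂, p₂, h₂, hsafe⟩
    obtain ⟨L, R, p, h, -⟩ := exists_isAND1Real_glueAt w₁ h₁ h₂ hsafe
    exact ⟨L, R, p, h⟩
  · rintro ⟨L₁, R₁, p₁, h₁, hc₁⟩ ⟨L₂, R₂, p₂, ⟨h₂, hc₂⟩, hsafe⟩
    obtain ⟨L, R, p, h, hc⟩ := exists_isAND1Real_glueAt w₁ h₁ h₂ hsafe
    exact ⟨L, R, p, h, hc hc₁ hc₂⟩
end

section
/- Let G be a connected graph whose block tree T can be rooted so that every maximal biconnected component of G belongs to c-AND(1) and every cut-vertex is safe in each of its descendant blocks. Then G belongs to c-AND(1). -/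
/-- `S` induces a biconnected subgraph of `G`: the induced subgraph is
connected and remains connected after deleting any single vertex. -/
def IsBiconnSet {V : Type*} (G : SimpleGraph V) (S : Set V) : Prop :=
  (SimpleGraph.induce S G).Connected ∧
    ∀ v ∈ S, (SimpleGraph.induce (S \ {v}) G).Connected

/-- `S` is a block of `G`: a maximal biconnected set of vertices. -/
def IsBlockSet {V : Type*} (G : SimpleGraph V) (S : Set V) : Prop :=
  IsBiconnSet G S ∧ ∀ T : Set V, IsBiconnSet G T → S ⊆ T → T = S

/-!
Build a `c-AND(1)`-realization of the union of the first `n` blocks by induction on `n`. First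
perturb the realization of the old part so that the representatives are pairwise distinct and
the intervals non-degenerate; the containment pattern survives because only finitely many strict
inequalities are involved. Then a small window around `p c` lies inside `B c` and contains no
other old representative. Shrink a safe realization of the new block by a positive affine map
so that its `p c` lands on the old `p c` and all its intervals fit in the window. The block tree
forbids edges between a new vertex and an old vertex other than `c`, and the window separates
such pairs; for a new vertex `x`, the point `p x` always lies in `B c`, and safety of `c` says
that `p c ∈ B x` happens only when `x` is adjacent to `c`.
-/

open Set Function SimpleGraph

section

variable {V : Type*}

lemma Set.Finite.exists_pos_le_abs_sub {T : Set ℝ} (hT : T.Finite) :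
    ∃ ε > 0, ∀ a ∈ T, ∀ b ∈ T, a ≠ b → ε ≤ |a - b| := by
  have hs : (image2 (· - ·) T T \ {0}).Finite := (hT.image2 _ hT).sdiff
  obtain ⟨ε, hε, hball⟩ := Metric.isOpen_iff.1 hs.isClosed.isOpen_compl 0 (by simp)
  refine ⟨ε, hε, fun a ha b hb hab => not_lt.1 fun hlt => hball (by simpa using hlt) ?_⟩
  exact ⟨mem_image2_of_mem ha hb, sub_ne_zero.2 hab⟩

lemma Set.Finite.exists_pos_mul_abs_sub_le {T : Set ℝ} (hT : T.Finite) (x₀ : ℝ) {r : ℝ}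
    (hr : 0 < r) : ∃ a > 0, ∀ t ∈ T, |a * (t - x₀)| ≤ r := by
  obtain ⟨M, hM⟩ := (Metric.isBounded_iff_subset_closedBall x₀).1 hT.isBounded
  refine ⟨r / (|M| + 1), by positivity, fun t ht => ?_⟩
  have htM : |t - x₀| ≤ M := by simpa [Real.dist_eq] using hM ht
  rw [abs_mul, abs_of_pos (by positivity), div_mul_eq_mul_div, div_le_iff₀ (by positivity)]
  exact mul_le_mul_of_nonneg_left (by linarith [le_abs_self M]) hr.le

lemma exists_injective_mem_Ioc [Finite V] {δ : ℝ} (hδ : 0 < δ) :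
    ∃ e : V → ℝ, Injective e ∧ ∀ v, e v ∈ Ioc 0 δ := by
  obtain ⟨f, hf⟩ := Countable.exists_injective_nat V
  let g := (Ioc_infinite hδ).natEmbedding
  exact ⟨fun v => g (f v), Subtype.val_injective.comp (g.injective.comp hf), fun v => (g (f v)).2⟩

lemma le_add_iff_of_gap {a b d ε : ℝ} (hgap : a ≠ b → ε ≤ |a - b|) (hd : 0 ≤ d)
    (hdε : d < ε) : a ≤ b + d ↔ a ≤ b := by
  refine ⟨fun h => not_lt.1 fun hba => ?_, fun h => by linarith⟩
  have := hgap hba.ne'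
  rw [abs_of_pos (sub_pos.2 hba)] at this
  linarith

lemma affine_mem_Icc_iff {a : ℝ} (ha : 0 < a) (b : ℝ) {x l r : ℝ} :
    a * x + b ∈ Icc (a * l + b) (a * r + b) ↔ x ∈ Icc l r := by
  simp only [mem_Icc, add_le_add_iff_right, mul_le_mul_iff_right₀ ha]

lemma exists_window [Finite V] {L R p : V → ℝ} (hp : Injective p) {c : V} (hc : L c < R c)
    (hmid : p c = (L c + R c) / 2) :
    ∃ r > 0, Icc (p c - r) (p c + r) ⊆ Icc (L c) (R c) ∧
      ∀ y ≠ c, p y ∉ Icc (p c - r) (p c + r) := by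
  obtain ⟨ε, hε, hgap⟩ := (finite_range p).exists_pos_le_abs_sub
  refine ⟨min (ε / 2) ((R c - L c) / 2), by positivity, Icc_subset_Icc ?_ ?_, fun y hy hyr => ?_⟩
  · linarith [min_le_right (ε / 2) ((R c - L c) / 2)]
  · linarith [min_le_right (ε / 2) ((R c - L c) / 2)]
  · have hεy := hgap _ (mem_range_self y) _ (mem_range_self c) (hp.ne hy)
    have hyc : |p y - p c| ≤ min (ε / 2) ((R c - L c) / 2) :=
      abs_sub_le_iff.2 ⟨by linarith [hyr.2], by linarith [hyr.1]⟩
    linarith [min_le_left (ε / 2) ((R c - L c) / 2)]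

/-- A `c-AND(1)`-realization of `G[S]` by functions on all of `V`; values off `S` are ignored. -/
def IsCAND1RealOn (G : SimpleGraph V) (S : Set V) (L R p : V → ℝ) : Prop :=
  (∀ v ∈ S, p v ∈ Icc (L v) (R v) ∧ p v = (L v + R v) / 2) ∧
    ∀ u ∈ S, ∀ v ∈ S, u ≠ v → (G.Adj u v ↔ p v ∈ Icc (L u) (R u) ∧ p u ∈ Icc (L v) (R v))

lemma inCAND1_of_subsingleton [Subsingleton V] (G : SimpleGraph V) : InCAND1 G :=
  ⟨0, 0, 0, ⟨fun _ => by simp, fun u v huv => absurd (Subsingleton.elim u v) huv⟩, fun _ => by simp⟩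

namespace IsCAND1RealOn

variable {G : SimpleGraph V} {U S : Set V} {L R p : V → ℝ}

lemma of_induce {L R p : S → ℝ} (h : IsCAND1Real (G.induce S) L R p) :
    IsCAND1RealOn G S (extend (↑) L (0 : V → ℝ)) (extend (↑) R (0 : V → ℝ))
      (extend (↑) p (0 : V → ℝ)) := by
  obtain ⟨⟨hmem, hadj⟩, hmid⟩ := h
  refine ⟨fun v hv => ?_, fun u hu v hv huv => ?_⟩
  · lift v to S using hv
    simp only [Subtype.val_injective.extend_apply]
    exact ⟨hmem v, hmid v⟩
  · lift u to S using hu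
    lift v to S using hv
    simp only [Subtype.val_injective.extend_apply, mem_Icc, and_assoc]
    exact hadj u v (fun h => huv (congrArg _ h))

lemma exists_of_safeCAND1 {c : V} {hc : c ∈ S} (h : SafeCAND1 (G.induce S) ⟨c, hc⟩) :
    ∃ L R p : V → ℝ, IsCAND1RealOn G S L R p ∧
      ∀ w ∈ S, p c ∈ Icc (L w) (R w) → w = c ∨ G.Adj c w := by
  obtain ⟨L, R, p, hr, hs⟩ := h
  refine ⟨_, _, _, of_induce hr, fun w hw hcw => ?_⟩
  lift w to S using hw
  rw [show extend (↑) p (0 : V → ℝ) c = p ⟨c, hc⟩ from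
    Subtype.val_injective.extend_apply p 0 ⟨c, hc⟩] at hcw
  simp only [Subtype.val_injective.extend_apply] at hcw
  exact (hs w hcw.1 hcw.2).imp (congrArg _) id

lemma inCAND1 (h : IsCAND1RealOn G univ L R p) : InCAND1 G :=
  ⟨L, R, p, ⟨fun v => (h.1 v trivial).1, fun u v huv => by
    rw [h.2 u trivial v trivial huv, mem_Icc, mem_Icc, and_assoc]⟩, fun v => (h.1 v trivial).2⟩

lemma affine (h : IsCAND1RealOn G S L R p) {a : ℝ} (ha : 0 < a) (b : ℝ) :
    IsCAND1RealOn G S (fun v => a * L v + b) (fun v => a * R v + b) (fun v => a * p v + b) := by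
  refine ⟨fun v hv => ⟨(affine_mem_Icc_iff ha b).2 (h.1 v hv).1, ?_⟩, fun u hu v hv huv => ?_⟩
  · dsimp only
    rw [(h.1 v hv).2]
    ring
  · simp only [affine_mem_Icc_iff ha]
    exact h.2 u hu v hv huv

/-- Shift every `p v` by a distinct amount in `(0, ε / 4]`, where `ε` is the least nonzero gap
between values of `L`, `R`, `p`, and widen every interval by `ε / 2`: no containment changes. -/
lemma exists_injective [Finite V] (h : IsCAND1RealOn G S L R p) :
    ∃ L' R' p' : V → ℝ, IsCAND1RealOn G S L' R' p' ∧ Injective p' ∧ ∀ v ∈ S, L' v < R' v := by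
  obtain ⟨ε, hε, hgap⟩ :=
    (((finite_range L).union (finite_range R)).union (finite_range p)).exists_pos_le_abs_sub
  have gap {a b : ℝ} (ha : a ∈ range L ∪ range R ∪ range p) (hb : b ∈ range L ∪ range R ∪ range p)
      (hab : a ≠ b) : ε ≤ |a - b| := hgap a ha b hb hab
  obtain ⟨e, he, heε⟩ := exists_injective_mem_Ioc (V := V) (by positivity : 0 < ε / 4)
  have hmem (u v : V) : p u + e u ∈ Icc (L v + e v - ε / 2) (R v + e v + ε / 2) ↔
      p u ∈ Icc (L v) (R v) := by
    obtain ⟨hu0, huε⟩ := heε u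
    obtain ⟨hv0, hvε⟩ := heε v
    simp only [mem_Icc]
    refine and_congr ?_ ?_
    · calc L v + e v - ε / 2 ≤ p u + e u ↔ L v ≤ p u + (e u - e v + ε / 2) := by
            constructor <;> intro <;> linarith
        _ ↔ L v ≤ p u := le_add_iff_of_gap (gap (by simp) (by simp)) (by linarith) (by linarith)
    · calc p u + e u ≤ R v + e v + ε / 2 ↔ p u ≤ R v + (e v - e u + ε / 2) := by
            constructor <;> intro <;> linarith
        _ ↔ p u ≤ R v := le_add_iff_of_gap (gap (by simp) (by simp)) (by linarith) (by linarith)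
  refine ⟨fun v => L v + e v - ε / 2, fun v => R v + e v + ε / 2, fun v => p v + e v,
    ⟨fun v hv => ⟨(hmem v v).2 (h.1 v hv).1, ?_⟩, fun u hu v hv huv => ?_⟩, fun u v huv => ?_,
    fun v hv => ?_⟩
  · dsimp only
    rw [(h.1 v hv).2]
    ring
  · rw [hmem, hmem]
    exact h.2 u hu v hv huv
  · simp only at huv
    obtain ⟨hu0, huε⟩ := heε u
    obtain ⟨hv0, hvε⟩ := heε v
    have hp : p u = p v := by
      by_contra hpne
      have hgap := gap (by simp) (by simp) hpne
      rw [show p u - p v = e v - e u by linarith] at hgap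
      linarith [(abs_sub_lt_iff.2 ⟨by linarith, by linarith⟩ : |e v - e u| < ε)]
    exact he (by linarith)
  · have := (h.1 v hv).1
    simp only [mem_Icc] at this
    dsimp only
    linarith

lemma piecewise [DecidablePred (· ∈ U)] {c : V} {W : Set ℝ} {L' R' p' : V → ℝ}
    (hcap : S ∩ U = {c}) (hedge : ∀ x ∈ S, x ∉ U → ∀ y ∈ U, y ∉ S → ¬ G.Adj x y)
    (h : IsCAND1RealOn G U L R p) (h' : IsCAND1RealOn G S L' R' p')
    (hsafe : ∀ w ∈ S, p' c ∈ Icc (L' w) (R' w) → w = c ∨ G.Adj c w) (hpc : p' c = p c)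
    (hW : W ⊆ Icc (L c) (R c)) (hWp : ∀ y ≠ c, p y ∉ W) (hW' : ∀ x ∈ S, Icc (L' x) (R' x) ⊆ W) :
    IsCAND1RealOn G (U ∪ S) (U.piecewise L L') (U.piecewise R R') (U.piecewise p p') := by
  obtain ⟨hcS, hcU⟩ := hcap.superset (mem_singleton c)
  have cross : ∀ x ∈ S, x ∉ U → ∀ y ∈ U,
      (G.Adj x y ↔ p y ∈ Icc (L' x) (R' x) ∧ p' x ∈ Icc (L y) (R y)) := by
    intro x hxS hxU y hyU
    have hxc : x ≠ c := fun hxc => hxU (hxc ▸ hcU)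
    by_cases hyc : y = c
    · rw [hyc, ← hpc]
      refine ⟨fun hadj => ⟨((h'.2 x hxS c hcS hxc).1 hadj).1, ?_⟩, fun hcx => ?_⟩
      · exact hW (hW' x hxS (h'.1 x hxS).1)
      · exact ((hsafe x hxS hcx.1).resolve_left hxc).symm
    · refine iff_of_false (hedge x hxS hxU y hyU fun hyS => hyc ?_) fun hadj => ?_
      · exact (hcap.subset ⟨hyS, hyU⟩ : y ∈ ({c} : Set V))
      · exact hWp y hyc (hW' x hxS hadj.1)
  refine ⟨fun v hv => ?_, fun u hu v hv huv => ?_⟩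
  · by_cases hvU : v ∈ U
    · simp only [piecewise_eq_of_mem _ _ _ hvU]
      exact h.1 v hvU
    · simp only [piecewise_eq_of_notMem _ _ _ hvU]
      exact h'.1 v (hv.resolve_left hvU)
  · by_cases huU : u ∈ U <;> by_cases hvU : v ∈ U <;>
      simp only [piecewise_eq_of_mem, piecewise_eq_of_notMem, huU, hvU, not_false_eq_true]
    · exact h.2 u huU v hvU huv
    · rw [G.adj_comm, cross v (hv.resolve_left hvU) hvU u huU, and_comm]
    · exact cross u (hu.resolve_left huU) huU v hvU
    · exact h'.2 u (hu.resolve_left huU) v (hv.resolve_left hvU) huv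

lemma exists_union [Finite V] {c : V} (hcap : S ∩ U = {c})
    (hedge : ∀ x ∈ S, x ∉ U → ∀ y ∈ U, y ∉ S → ¬ G.Adj x y) (h : IsCAND1RealOn G U L R p)
    {L' R' p' : V → ℝ} (h' : IsCAND1RealOn G S L' R' p')
    (hsafe : ∀ w ∈ S, p' c ∈ Icc (L' w) (R' w) → w = c ∨ G.Adj c w) :
    ∃ L R p : V → ℝ, IsCAND1RealOn G (U ∪ S) L R p := by
  classical
  have hcU : c ∈ U := (hcap.superset (mem_singleton c)).2
  obtain ⟨L, R, p, h, hp, hLR⟩ := h.exists_injective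
  obtain ⟨r, hr, hwin, hout⟩ := exists_window hp (hLR c hcU) (h.1 c hcU).2
  obtain ⟨a, ha, hbound⟩ :=
    ((finite_range L').union (finite_range R')).exists_pos_mul_abs_sub_le (p' c) hr
  set b := p c - a * p' c
  refine ⟨_, _, _, h.piecewise hcap hedge (h'.affine ha b) (fun w hw hcw => hsafe w hw ?_)
    (by ring) hwin hout fun x _ => Icc_subset_Icc ?_ ?_⟩
  · exact (affine_mem_Icc_iff ha b).1 hcw
  · linarith [(abs_le.1 (hbound (L' x) (by simp))).1]
  · linarith [(abs_le.1 (hbound (R' x) (by simp))).2]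

end IsCAND1RealOn

lemma isBiconnSet_pair {G : SimpleGraph V} {a b : V} (hab : G.Adj a b) : IsBiconnSet G {a, b} := by
  refine ⟨induce_pair_connected_of_adj hab, fun v hv => ?_⟩
  rcases hv with rfl | rfl
  · rw [pair_sdiff_left hab.ne, induce_singleton_eq_top]
    exact connected_top
  · rw [pair_sdiff_right hab.ne, induce_singleton_eq_top]
    exact connected_top

lemma IsBiconnSet.exists_isBlockSet_superset [Finite V] {G : SimpleGraph V} {S : Set V}
    (hS : IsBiconnSet G S) : ∃ T, IsBlockSet G T ∧ S ⊆ T := by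
  obtain ⟨T, hST, hT⟩ := Finite.exists_le_maximal hS
  exact ⟨T, ⟨hT.1, fun T' hT' hTT' => (hT.2 hT' hTT').antisymm hTT'⟩, hST⟩

section Blocks

variable {G : SimpleGraph V} {k : ℕ} {blocks : Fin k → Set V}

def prefixUnion (blocks : Fin k → Set V) (n : ℕ) : Set V :=
  ⋃ j : {j : Fin k // (j : ℕ) < n}, blocks j

lemma mem_prefixUnion {x : V} {n : ℕ} :
    x ∈ prefixUnion blocks n ↔ ∃ j : Fin k, (j : ℕ) < n ∧ x ∈ blocks j := by
  simp [prefixUnion]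

lemma prefixUnion_zero : prefixUnion blocks 0 = ∅ := by
  ext x
  simp [mem_prefixUnion]

lemma prefixUnion_succ {n : ℕ} (hn : n < k) :
    prefixUnion blocks (n + 1) = prefixUnion blocks n ∪ blocks ⟨n, hn⟩ := by
  ext x
  simp only [mem_prefixUnion, mem_union]
  constructor
  · rintro ⟨j, hj, hx⟩
    rcases Nat.lt_succ_iff_lt_or_eq.1 hj with hj | hj
    · exact Or.inl ⟨j, hj, hx⟩
    · exact Or.inr (by rwa [show j = ⟨n, hn⟩ from Fin.ext hj] at hx)
  · rintro (⟨j, hj, hx⟩ | hx)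
    · exact ⟨j, hj.trans n.lt_succ_self, hx⟩
    · exact ⟨_, n.lt_succ_self, hx⟩

lemma exists_mem_blocks_of_adj [Finite V] (hall : ∀ S, IsBlockSet G S → ∃ i, blocks i = S)
    {a b : V} (hab : G.Adj a b) : ∃ i, a ∈ blocks i ∧ b ∈ blocks i := by
  obtain ⟨T, hT, hsub⟩ := (isBiconnSet_pair hab).exists_isBlockSet_superset
  obtain ⟨i, rfl⟩ := hall T hT
  exact ⟨i, hsub (mem_insert a _), hsub (mem_insert_of_mem a rfl)⟩

lemma prefixUnion_eq_univ [Finite V] [Nontrivial V] (hconn : G.Connected)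
    (hall : ∀ S, IsBlockSet G S → ∃ i, blocks i = S) : prefixUnion blocks k = univ := by
  refine eq_univ_of_forall fun x => ?_
  obtain ⟨y, hxy⟩ := hconn.preconnected.exists_adj_of_nontrivial x
  obtain ⟨i, hx, -⟩ := exists_mem_blocks_of_adj hall hxy
  exact mem_prefixUnion.2 ⟨i, i.2, hx⟩

lemma not_adj_of_mem_blocks_of_mem_prefixUnion [Finite V]
    (hall : ∀ S, IsBlockSet G S → ∃ i, blocks i = S)
    (hsub : ∀ m : Fin k, 0 < (m : ℕ) → (blocks m ∩ prefixUnion blocks m).Subsingleton)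
    (i : Fin k) {x y : V} (hx : x ∈ blocks i) (hx' : x ∉ prefixUnion blocks i)
    (hy : y ∈ prefixUnion blocks i) (hy' : y ∉ blocks i) : ¬ G.Adj x y := by
  intro hxy
  obtain ⟨m, hxm, hym⟩ := exists_mem_blocks_of_adj hall hxy
  obtain ⟨j, hji, hyj⟩ := mem_prefixUnion.1 hy
  rcases lt_trichotomy (m : ℕ) i with h | h | h
  · exact hx' (mem_prefixUnion.2 ⟨m, h, hxm⟩)
  · exact hy' (Fin.ext h ▸ hym)
  · exact hxy.ne (hsub m (by omega) ⟨hxm, mem_prefixUnion.2 ⟨i, h, hx⟩⟩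
      ⟨hym, mem_prefixUnion.2 ⟨j, by omega, hyj⟩⟩)

lemma exists_isCAND1RealOn_prefixUnion [Finite V]
    (hcand : ∀ i, InCAND1 (G.induce (blocks i)))
    (hsafe : ∀ i : Fin k, 0 < (i : ℕ) → ∃ c : V, ∃ hc : c ∈ blocks i,
      blocks i ∩ prefixUnion blocks i = {c} ∧ SafeCAND1 (G.induce (blocks i)) ⟨c, hc⟩)
    (hedge : ∀ i : Fin k, ∀ x ∈ blocks i, x ∉ prefixUnion blocks i →
      ∀ y ∈ prefixUnion blocks i, y ∉ blocks i → ¬ G.Adj x y) :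
    ∀ n ≤ k, ∃ L R p : V → ℝ, IsCAND1RealOn G (prefixUnion blocks n) L R p := by
  intro n
  induction n with
  | zero => exact fun _ => ⟨0, 0, 0, by simp [IsCAND1RealOn, prefixUnion_zero]⟩
  | succ n ih =>
    intro hn
    rw [prefixUnion_succ hn]
    rcases Nat.eq_zero_or_pos n with rfl | hpos
    · obtain ⟨L, R, p, h⟩ := hcand ⟨0, hn⟩
      rw [prefixUnion_zero, empty_union]
      exact ⟨_, _, _, .of_induce h⟩
    · obtain ⟨c, hc, hcap, hs⟩ := hsafe ⟨n, hn⟩ hpos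
      obtain ⟨L, R, p, h⟩ := ih (by omega)
      obtain ⟨L', R', p', h', hsafe'⟩ := IsCAND1RealOn.exists_of_safeCAND1 hs
      exact h.exists_union hcap (hedge _) h' hsafe'

end Blocks

end

theorem blocks_safe_mem_cand1_general {V : Type*} [Fintype V] (G : SimpleGraph V)
    (hconn : G.Connected) (k : ℕ) (blocks : Fin k → Set V)
    (hall : ∀ S : Set V, IsBlockSet G S → ∃ i, blocks i = S)
    (hcand : ∀ i, InCAND1 (SimpleGraph.induce (blocks i) G))
    (hsafe : ∀ i : Fin k, 0 < (i : ℕ) → ∃ c : V, ∃ hc : c ∈ blocks i,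
      (blocks i ∩ ⋃ j : {j : Fin k // (j : ℕ) < (i : ℕ)}, blocks j) = {c} ∧
      SafeCAND1 (SimpleGraph.induce (blocks i) G) ⟨c, hc⟩) :
    InCAND1 G := by
  rcases subsingleton_or_nontrivial V with hV | hV
  · exact inCAND1_of_subsingleton G
  have hsub (m : Fin k) (hm : 0 < (m : ℕ)) : (blocks m ∩ prefixUnion blocks m).Subsingleton := by
    obtain ⟨c, -, hc, -⟩ := hsafe m hm
    exact hc ▸ subsingleton_singleton
  obtain ⟨L, R, p, h⟩ := exists_isCAND1RealOn_prefixUnion hcand hsafe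
    (fun i _ hx hx' _ hy hy' => not_adj_of_mem_blocks_of_mem_prefixUnion hall hsub i hx hx' hy hy')
    k le_rfl
  rw [prefixUnion_eq_univ hconn hall] at h
  exact h.inCAND1

/-- If the block tree of a connected graph `G` can be rooted (encoded here by a
breadth-first enumeration `blocks 0, blocks 1, …` of all the blocks, each later
block meeting the union of the earlier ones in exactly one cut-vertex) so that
every maximal biconnected component of `G` belongs to `c-AND(1)` and every
cut-vertex is safe in each of its descendant blocks, then `G` belongs to
`c-AND(1)`. -/
theorem blocks_safe_mem_cand1 {V : Type*} [Fintype V] (G : SimpleGraph V)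
    (hconn : G.Connected) (k : ℕ) (blocks : Fin k → Set V)
    (hblock : ∀ i, IsBlockSet G (blocks i))
    (hall : ∀ S : Set V, IsBlockSet G S → ∃ i, blocks i = S)
    (hinj : Function.Injective blocks)
    (hcand : ∀ i, InCAND1 (SimpleGraph.induce (blocks i) G))
    (hsafe : ∀ i : Fin k, 0 < (i : ℕ) → ∃ c : V, ∃ hc : c ∈ blocks i,
      (blocks i ∩ ⋃ j : {j : Fin k // (j : ℕ) < (i : ℕ)}, blocks j) = {c} ∧
      SafeCAND1 (SimpleGraph.induce (blocks i) G) ⟨c, hc⟩) :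
    InCAND1 G :=
  blocks_safe_mem_cand1_general G hconn k blocks hall hcand hsafe
end

section
/- Every block graph (a graph in which every maximal biconnected component is a clique) belongs to c-AND(1). -/
/-!
Two neighbours of a vertex `v` that are joined by a path avoiding `v` are adjacent in a block
graph, because `v` and the path span a biconnected set, which lies in a block (`DetourAdj`).

A vertex `v` is realized by a ball `(p v, r v)`, i.e. the interval `[p v - r v, p v + r v]` with
midpoint `p v`, and `u, v` are adjacent iff `|p u - p v| ≤ min (r u) (r v)`. Add the vertices one
at a time so that the induced graph stays connected. By `DetourAdj` the neighbourhood of the new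
vertex is then a clique, and it is either a maximal clique or a single vertex. Alongside the
balls we keep a slot for every maximal clique: a ball that is linked exactly to the members of the
clique, slots of distinct maximal cliques being apart. The new vertex takes the slot of its
neighbourhood (a single vertex `y` gets a fresh small slot right next to `p y`), and a slightly
moved copy of that slot becomes the slot of the new maximal clique.
-/

namespace SimpleGraph

variable {V : Type*} {G : SimpleGraph V}

def DetourAdj (G : SimpleGraph V) : Prop :=
  ∀ ⦃v u w : V⦄, G.Adj v u → G.Adj v w → u ≠ w → ∀ p : G.Walk u w, v ∉ p.support → G.Adj u w

lemma connected_induce_of_forall_walk {s : Set V} {r : V} (hr : r ∈ s)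
    (hwalk : ∀ a ∈ s, ∃ p : G.Walk r a, ∀ x ∈ p.support, x ∈ s) :
    (G.induce s).Connected := by
  refine G.induce_connected_of_patches r hr fun {a} ha => ?_
  obtain ⟨p, hp⟩ := hwalk a ha
  exact ⟨_, hp, p.start_mem_support, p.end_mem_support, p.connected_induce_support _ _⟩

lemma Walk.IsPath.notMem_takeUntil_or_notMem_dropUntil [DecidableEq V] {u w a x : V}
    {p : G.Walk u w} (hp : p.IsPath) (ha : a ∈ p.support) (hxa : x ≠ a) :
    x ∉ (p.takeUntil a ha).support ∨ x ∉ (p.dropUntil a ha).support := by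
  by_contra! ⟨hx₁, hx₂⟩
  have hnodup := hp.support_nodup
  rw [← p.take_spec ha, Walk.support_append] at hnodup
  rw [← Walk.cons_tail_support, List.mem_cons] at hx₂
  exact List.disjoint_of_nodup_append hnodup hx₁ (hx₂.resolve_left hxa)

lemma isBiconnSet_support_cons {v u w : V} (hvu : G.Adj v u) (hvw : G.Adj v w) {P : G.Walk u w}
    (hP : P.IsPath) (hvP : v ∉ P.support) :
    IsBiconnSet G {y | y ∈ (Walk.cons hvu P).support} := by
  classical
  refine ⟨(Walk.cons hvu P).connected_induce_support, fun x hx => ?_⟩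
  rcases eq_or_ne x v with rfl | hxv
  · refine connected_induce_of_forall_walk (r := u) (by simp [hvu.ne.symm]) fun a ha => ?_
    have haP : a ∈ P.support := by
      simpa [show a ≠ x from ha.2] using ha.1
    refine ⟨P.takeUntil a haP, fun y hy => ?_⟩
    have hyP := P.support_takeUntil_subset_support haP hy
    exact ⟨by simp [hyP], fun hyx => hvP (by rwa [Set.mem_singleton_iff.1 hyx] at hyP)⟩
  · refine connected_induce_of_forall_walk (r := v) (by simp [hxv.symm]) fun a ha => ?_
    obtain ⟨ha, hax⟩ := ha
    rw [Set.mem_singleton_iff] at hax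
    simp only [Set.mem_ofPred_eq, Walk.support_cons, List.mem_cons] at ha
    rcases ha with rfl | haP
    · exact ⟨Walk.nil, by simp [hax]⟩
    rcases hP.notMem_takeUntil_or_notMem_dropUntil haP (Ne.symm hax) with hx' | hx'
    · refine ⟨Walk.cons hvu (P.takeUntil a haP), fun y hy => ?_⟩
      simp only [Walk.support_cons, List.mem_cons] at hy
      rcases hy with rfl | hy
      · simp [hxv.symm]
      · exact ⟨by simp [P.support_takeUntil_subset_support haP hy],
          fun hyx => hx' (Set.mem_singleton_iff.1 hyx ▸ hy)⟩
    · refine ⟨Walk.cons hvw (P.dropUntil a haP).reverse, fun y hy => ?_⟩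
      simp only [Walk.support_cons, Walk.support_reverse, List.mem_cons, List.mem_reverse] at hy
      rcases hy with rfl | hy
      · simp [hxv.symm]
      · exact ⟨by simp [P.support_dropUntil_subset_support haP hy],
          fun hyx => hx' (Set.mem_singleton_iff.1 hyx ▸ hy)⟩

lemma isClique_of_isBiconnSet [Finite V] (h : ∀ S : Set V, IsBlockSet G S → G.IsClique S)
    {S : Set V} (hS : IsBiconnSet G S) : G.IsClique S := by
  obtain ⟨T, hST, hT⟩ := Finite.exists_le_maximal hS
  exact (h T ⟨hT.prop, fun T' hT' hTT' => hT.eq_of_superset hT' hTT'⟩).subset hST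

lemma detourAdj_of_forall_isBlockSet_isClique [Finite V]
    (h : ∀ S : Set V, IsBlockSet G S → G.IsClique S) : G.DetourAdj := by
  classical
  intro v u w hvu hvw huw p hvp
  have hvP : v ∉ p.bypass.support := fun hv => hvp (p.support_bypass_subset_support hv)
  exact isClique_of_isBiconnSet h (isBiconnSet_support_cons hvu hvw p.bypass_isPath hvP)
    (by simp) (by simp) huw

structure IsMaxCliqueIn (G : SimpleGraph V) (s M : Set V) : Prop where
  subset : M ⊆ s
  isClique : G.IsClique M
  exists_not_adj : ∀ w ∈ s, w ∉ M → ∃ u ∈ M, ¬ G.Adj w u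

lemma IsMaxCliqueIn.eq_insert_neighborSet_inter {s M : Set V} {v : V}
    (hC : G.IsClique (G.neighborSet v ∩ s)) (hM : IsMaxCliqueIn G (insert v s) M) (hvM : v ∈ M) :
    M = insert v (G.neighborSet v ∩ s) := by
  refine subset_antisymm (fun u hu => ?_) (Set.insert_subset hvM fun w hw => ?_)
  · rcases eq_or_ne u v with rfl | huv
    · exact Set.mem_insert _ _
    · exact Or.inr ⟨hM.isClique hvM hu huv.symm, (hM.subset hu).resolve_left huv⟩
  · by_contra hwM
    obtain ⟨u, huM, hwu⟩ := hM.exists_not_adj w (Or.inr hw.2) hwM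
    rcases eq_or_ne u v with rfl | huv
    · exact hwu hw.1.symm
    · exact hwu (hC hw ⟨hM.isClique hvM huM huv.symm, (hM.subset huM).resolve_left huv⟩
        (ne_of_mem_of_not_mem huM hwM).symm)

lemma IsMaxCliqueIn.of_insert {s M : Set V} {v : V} (hM : IsMaxCliqueIn G (insert v s) M)
    (hvM : v ∉ M) : IsMaxCliqueIn G s M ∧ M ≠ G.neighborSet v ∩ s := by
  refine ⟨⟨fun u hu => (hM.subset hu).resolve_left (ne_of_mem_of_not_mem hu hvM),
    hM.isClique, fun w hw => hM.exists_not_adj w (Or.inr hw)⟩, ?_⟩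
  rintro rfl
  obtain ⟨u, huM, hvu⟩ := hM.exists_not_adj v (Set.mem_insert _ _) hvM
  exact hvu huM.1

lemma exists_adj_of_preconnected_induce_insert {s : Set V} {v w : V} (hv : v ∉ s) (hw : w ∈ s)
    (hs : (G.induce (insert v s)).Preconnected) : ∃ y ∈ s, G.Adj v y := by
  obtain ⟨p⟩ := hs ⟨v, Set.mem_insert _ _⟩ ⟨w, Set.mem_insert_of_mem _ hw⟩
  have hadj := p.adj_snd (p.not_nil_of_ne fun h => hv ((Subtype.mk.inj h).symm ▸ hw))
  exact ⟨p.snd, p.snd.2.resolve_left fun h => hadj.ne (Subtype.ext h.symm), hadj⟩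

lemma exists_preconnected_induce_diff_singleton [Finite V] {s : Set V}
    (hs : (G.induce s).Connected) : ∃ v ∈ s, (G.induce (s \ {v})).Preconnected := by
  obtain ⟨v, hv⟩ := hs.exists_preconnected_induce_compl_singleton_of_finite
  refine ⟨v, v.2, hv.map ⟨fun x => ⟨x.1, x.1.2, fun h => x.2 (Subtype.ext h)⟩, fun h => h⟩ ?_⟩
  rintro ⟨y, hys, hyv⟩
  exact ⟨⟨⟨y, hys⟩, fun h => hyv (congrArg Subtype.val h)⟩, rfl⟩

namespace DetourAdj

variable (hG : G.DetourAdj) {s : Set V} {v : V} (hv : v ∉ s)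
include hG hv

lemma isClique_neighborSet_inter (hs : (G.induce s).Preconnected) :
    G.IsClique (G.neighborSet v ∩ s) := by
  rintro u ⟨hvu, hu⟩ w ⟨hvw, hw⟩ huw
  obtain ⟨p⟩ := hs ⟨u, hu⟩ ⟨w, hw⟩
  have hp : ∀ x ∈ (p.map (Embedding.induce s).toHom).support, x ∈ s := by
    intro x hx
    rw [Walk.support_map, List.mem_map] at hx
    obtain ⟨y, -, rfl⟩ := hx
    exact y.2
  exact hG hvu hvw huw _ fun h => hv (hp v h)

lemma isMaxCliqueIn_or_eq_singleton (hs : (G.induce s).Preconnected)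
    (hvs : (G.induce (insert v s)).Preconnected) :
    IsMaxCliqueIn G s (G.neighborSet v ∩ s) ∨ ∃ y ∈ s, G.neighborSet v ∩ s = {y} := by
  have hC := hG.isClique_neighborSet_inter hv hs
  by_contra! ⟨hmax, hsingle⟩
  obtain ⟨w, hws, hwC, hwadj⟩ : ∃ w ∈ s, w ∉ G.neighborSet v ∩ s ∧
      ∀ u ∈ G.neighborSet v ∩ s, G.Adj w u := by
    by_contra! h
    exact hmax ⟨Set.inter_subset_right, hC, h⟩
  obtain ⟨y, hys, hvy⟩ := exists_adj_of_preconnected_induce_insert hv hws hvs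
  refine hsingle y hys (Set.eq_singleton_iff_unique_mem.2 ⟨⟨hvy, hys⟩, fun z hz => ?_⟩)
  obtain ⟨hvz, hzs⟩ := hz
  rw [mem_neighborSet] at hvz
  by_contra hzy
  have hyw : y ≠ w := ne_of_mem_of_not_mem (⟨hvy, hys⟩ : y ∈ G.neighborSet v ∩ s) hwC
  have hvw : G.Adj v w := hG hvy.symm (hwadj y ⟨hvy, hys⟩).symm (ne_of_mem_of_not_mem hws hv).symm
    (Walk.cons hvz (Walk.cons (hwadj z ⟨hvz, hzs⟩).symm Walk.nil))
    (by simp [ne_of_mem_of_not_mem hys hv, Ne.symm hzy, hyw])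
  exact hwC ⟨hvw, hws⟩

end DetourAdj

end SimpleGraph

lemma Filter.Eventually.exists_notMem_of_finite {P : ℝ → Prop} {q : ℝ}
    (h : ∀ᶠ c in nhds q, P c) {S : Set ℝ} (hS : S.Finite) : ∃ c, P c ∧ c ∉ S := by
  obtain ⟨ε, hε, hball⟩ := Metric.eventually_nhds_iff.1 h
  obtain ⟨c, ⟨hqc, hcε⟩, hcS⟩ := ((Set.Ioo_infinite (lt_add_of_pos_right q hε)).sdiff hS).nonempty
  exact ⟨c, hball (by rw [Real.dist_eq, abs_lt]; constructor <;> linarith), hcS⟩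

namespace CAND1

open SimpleGraph Filter Topology Function

/-- Balls on the line are pairs `(centre, radius)`. Two balls are linked when each contains the
other's centre in its interior, and apart when some centre lies outside the other closed ball. -/
def Linked (x y : ℝ × ℝ) : Prop := |x.1 - y.1| < min x.2 y.2

def Apart (x y : ℝ × ℝ) : Prop := min x.2 y.2 < |x.1 - y.1|

lemma Linked.symm {x y : ℝ × ℝ} (h : Linked x y) : Linked y x := by
  rwa [Linked, abs_sub_comm, min_comm]

lemma Apart.symm {x y : ℝ × ℝ} (h : Apart x y) : Apart y x := by
  rwa [Apart, abs_sub_comm, min_comm]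

lemma Apart.fst_ne {x y : ℝ × ℝ} (h : Apart x y) (hx : 0 < x.2) (hy : 0 < y.2) : x.1 ≠ y.1 := by
  intro hxy
  rw [Apart, hxy, sub_self, abs_zero] at h
  exact (lt_min hx hy).not_gt h

lemma Linked.eventually_nhds {q ρ : ℝ} {y : ℝ × ℝ} (h : Linked (q, ρ) y) :
    ∀ᶠ c in 𝓝 q, Linked (c, ρ) y :=
  (continuous_sub_right y.1).abs.continuousAt.eventually_lt continuousAt_const h

lemma Apart.eventually_nhds {q ρ : ℝ} {y : ℝ × ℝ} (h : Apart (q, ρ) y) :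
    ∀ᶠ c in 𝓝 q, Apart (c, ρ) y :=
  continuousAt_const.eventually_lt (continuous_sub_right y.1).abs.continuousAt h

lemma apart_add_two_mul {a ε : ℝ} {y : ℝ × ℝ} (hε : 0 ≤ ε) (h : 3 * ε < |a - y.1|) :
    Apart (a + ε, 2 * ε) y := by
  have htri := abs_sub_abs_le_abs_sub (a - y.1) (a + ε - y.1)
  rw [show a - y.1 - (a + ε - y.1) = -ε by ring, abs_neg, abs_of_nonneg hε] at htri
  exact (min_le_left _ _).trans_lt (by dsimp only; linarith)

variable {V : Type*} {G : SimpleGraph V} {s M : Set V} {b : V → ℝ × ℝ} {x : ℝ × ℝ}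
  {σ : Set V → ℝ × ℝ}

/-- A slot for `M` is a ball that a vertex added to `s` could take so as to be linked exactly to
the vertices of `M`. -/
structure IsSlot (s M : Set V) (b : V → ℝ × ℝ) (x : ℝ × ℝ) : Prop where
  radius_pos : 0 < x.2
  linked : ∀ u ∈ M, Linked x (b u)
  fst_ne_of_mem : ∀ u ∈ M, x.1 ≠ (b u).1
  apart : ∀ w ∈ s, w ∉ M → Apart x (b w)

structure IsBallRealization (G : SimpleGraph V) (s : Set V) (b : V → ℝ × ℝ) : Prop where
  radius_pos : ∀ v ∈ s, 0 < (b v).2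
  linked_of_adj : ∀ u ∈ s, ∀ w ∈ s, G.Adj u w → Linked (b u) (b w)
  apart_of_not_adj : ∀ u ∈ s, ∀ w ∈ s, u ≠ w → ¬ G.Adj u w → Apart (b u) (b w)
  injOn_fst : Set.InjOn (fun v => (b v).1) s

/-- The induction invariant. Slots of distinct maximal cliques are apart, so that vertices later
placed into them are not adjacent. -/
structure IsSlottedRealization (G : SimpleGraph V) (s : Set V) (b : V → ℝ × ℝ)
    (σ : Set V → ℝ × ℝ) : Prop extends IsBallRealization G s b where
  isSlot : ∀ M, IsMaxCliqueIn G s M → IsSlot s M b (σ M)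
  apart_slot : ∀ M N, IsMaxCliqueIn G s M → IsMaxCliqueIn G s N → M ≠ N → Apart (σ M) (σ N)

lemma IsSlot.fst_ne (hx : IsSlot s M b x) (hb : ∀ v ∈ s, 0 < (b v).2) {w : V} (hw : w ∈ s) :
    x.1 ≠ (b w).1 := by
  by_cases hwM : w ∈ M
  · exact hx.fst_ne_of_mem w hwM
  · exact (hx.apart w hw hwM).fst_ne hx.radius_pos (hb w hw)

lemma IsSlot.insert_of_linked [DecidableEq V] (hx : IsSlot s M b x) {v : V} {z : ℝ × ℝ}
    (hxz : Linked x z) (hne : x.1 ≠ z.1) : IsSlot (insert v s) (insert v M) (update b v z) x where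
  radius_pos := hx.radius_pos
  linked u hu := by
    rcases eq_or_ne u v with rfl | huv
    · simpa using hxz
    · rw [update_of_ne huv]
      exact hx.linked u (hu.resolve_left huv)
  fst_ne_of_mem u hu := by
    rcases eq_or_ne u v with rfl | huv
    · simpa using hne
    · rw [update_of_ne huv]
      exact hx.fst_ne_of_mem u (hu.resolve_left huv)
  apart w hw hwM := by
    have hwv : w ≠ v := fun h => hwM (h ▸ Set.mem_insert _ _)
    rw [update_of_ne hwv]
    exact hx.apart w (hw.resolve_left hwv) fun h => hwM (Or.inr h)

lemma IsSlot.insert_of_apart [DecidableEq V] (hx : IsSlot s M b x) {v : V} (hvM : v ∉ M)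
    {z : ℝ × ℝ} (hxz : Apart x z) : IsSlot (insert v s) M (update b v z) x where
  radius_pos := hx.radius_pos
  linked u hu := by
    rw [update_of_ne (ne_of_mem_of_not_mem hu hvM)]
    exact hx.linked u hu
  fst_ne_of_mem u hu := by
    rw [update_of_ne (ne_of_mem_of_not_mem hu hvM)]
    exact hx.fst_ne_of_mem u hu
  apart w hw hwM := by
    rcases eq_or_ne w v with rfl | hwv
    · simpa using hxz
    · rw [update_of_ne hwv]
      exact hx.apart w (hw.resolve_left hwv) hwM

/-- All conditions on a slot are strict, so they survive a small move of its centre. -/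
lemma IsSlot.exists_perturb [Finite V] (hx : IsSlot s M b x) {P : Set V → Prop}
    (hxσ : ∀ N, P N → Apart x (σ N)) :
    ∃ c, c ≠ x.1 ∧ Linked (c, x.2) x ∧ IsSlot s M b (c, x.2) ∧ ∀ N, P N → Apart (c, x.2) (σ N) := by
  have hev : ∀ᶠ c in 𝓝 x.1, Linked (c, x.2) x ∧ (∀ u, u ∈ M → Linked (c, x.2) (b u)) ∧
      (∀ w, w ∈ s → w ∉ M → Apart (c, x.2) (b w)) ∧ ∀ N, P N → Apart (c, x.2) (σ N) := by
    refine .and ?_ (.and ?_ (.and ?_ ?_))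
    · exact Linked.eventually_nhds (by simpa [Linked] using hx.radius_pos)
    · exact eventually_all.2 fun u => eventually_imp_distrib_left.2 fun hu =>
        (hx.linked u hu).eventually_nhds
    · exact eventually_all.2 fun w => eventually_imp_distrib_left.2 fun hw =>
        eventually_imp_distrib_left.2 fun hwM => (hx.apart w hw hwM).eventually_nhds
    · exact eventually_all.2 fun N => eventually_imp_distrib_left.2 fun hN =>
        (hxσ N hN).eventually_nhds
  obtain ⟨c, ⟨hcx, hcM, hcs, hcσ⟩, hcS⟩ :=
    hev.exists_notMem_of_finite ((Set.finite_range fun u => (b u).1).insert x.1)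
  refine ⟨c, fun h => hcS (Or.inl h), hcx, ⟨hx.radius_pos, hcM, fun u _ h => ?_, hcs⟩, hcσ⟩
  exact hcS (Or.inr ⟨u, h.symm⟩)

lemma IsBallRealization.insert_of_isSlot [DecidableEq V] (hb : IsBallRealization G s b) {v : V}
    (hv : v ∉ s) (hx : IsSlot s (G.neighborSet v ∩ s) b x) :
    IsBallRealization G (insert v s) (update b v x) := by
  have hbu : ∀ u ∈ s, update b v x u = b u := fun u hu =>
    update_of_ne (ne_of_mem_of_not_mem hu hv) _ _
  refine ⟨?_, ?_, ?_, ?_⟩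
  · rintro u (rfl | hu)
    · simpa using hx.radius_pos
    · rw [hbu u hu]
      exact hb.radius_pos u hu
  · rintro u (rfl | hu) w (rfl | hw) huw
    · exact (G.irrefl huw).elim
    · rw [update_self, hbu w hw]
      exact hx.linked w ⟨huw, hw⟩
    · rw [update_self, hbu u hu]
      exact (hx.linked u ⟨huw.symm, hu⟩).symm
    · rw [hbu u hu, hbu w hw]
      exact hb.linked_of_adj u hu w hw huw
  · rintro u (rfl | hu) w (rfl | hw) huw hnadj
    · exact absurd rfl huw
    · rw [update_self, hbu w hw]
      exact hx.apart w hw fun h => hnadj h.1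
    · rw [update_self, hbu u hu]
      exact (hx.apart u hu fun h => hnadj h.1.symm).symm
    · rw [hbu u hu, hbu w hw]
      exact hb.apart_of_not_adj u hu w hw huw hnadj
  · rintro u (rfl | hu) w (rfl | hw) huw <;> dsimp only at huw
    · rfl
    · rw [update_self, hbu w hw] at huw
      exact absurd huw (hx.fst_ne hb.radius_pos hw)
    · rw [update_self, hbu u hu] at huw
      exact absurd huw.symm (hx.fst_ne hb.radius_pos hu)
    · rw [hbu u hu, hbu w hw] at huw
      exact hb.injOn_fst hu hw huw

lemma isSlottedRealization_empty (b : V → ℝ × ℝ) :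
    IsSlottedRealization G ∅ b fun _ => (0, 1) where
  radius_pos _ h := h.elim
  linked_of_adj _ h := h.elim
  apart_of_not_adj _ h := h.elim
  injOn_fst := Set.injOn_empty _
  isSlot _ hM := ⟨one_pos, fun _ hu => (hM.subset hu).elim, fun _ hu => (hM.subset hu).elim,
    fun _ hw => hw.elim⟩
  apart_slot _ _ hM hN hMN :=
    (hMN ((Set.subset_empty_iff.1 hM.subset).trans (Set.subset_empty_iff.1 hN.subset).symm)).elim

lemma IsSlottedRealization.insert_of_isSlot [Finite V] (hb : IsSlottedRealization G s b σ)
    {v : V} (hv : v ∉ s) (hC : G.IsClique (G.neighborSet v ∩ s))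
    (hx : IsSlot s (G.neighborSet v ∩ s) b x)
    (hxσ : ∀ M, IsMaxCliqueIn G s M → M ≠ G.neighborSet v ∩ s → Apart x (σ M)) :
    ∃ b' σ', IsSlottedRealization G (insert v s) b' σ' := by
  classical
  obtain ⟨c, hcx, hlinked, hcslot, hcσ⟩ := hx.exists_perturb (P := fun M =>
    IsMaxCliqueIn G s M ∧ M ≠ G.neighborSet v ∩ s) fun M hM => hxσ M hM.1 hM.2
  refine ⟨update b v x, fun M => if v ∈ M then (c, x.2) else σ M,
    hb.toIsBallRealization.insert_of_isSlot hv hx, fun M hM => ?_, fun M N hM hN hMN => ?_⟩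
  · by_cases hvM : v ∈ M
    · rw [if_pos hvM, hM.eq_insert_neighborSet_inter hC hvM]
      exact hcslot.insert_of_linked hlinked hcx
    · obtain ⟨hM', hMC⟩ := hM.of_insert hvM
      rw [if_neg hvM]
      exact (hb.isSlot M hM').insert_of_apart hvM (hxσ M hM' hMC).symm
  · by_cases hvM : v ∈ M <;> by_cases hvN : v ∈ N
    · exact absurd ((hM.eq_insert_neighborSet_inter hC hvM).trans
        (hN.eq_insert_neighborSet_inter hC hvN).symm) hMN
    · rw [if_pos hvM, if_neg hvN]
      exact hcσ N (hN.of_insert hvN)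
    · rw [if_neg hvM, if_pos hvN]
      exact (hcσ M (hM.of_insert hvM)).symm
    · rw [if_neg hvM, if_neg hvN]
      exact hb.apart_slot M N (hM.of_insert hvM).1 (hN.of_insert hvN).1 hMN

lemma IsSlottedRealization.exists_slot_singleton [Finite V] (hb : IsSlottedRealization G s b σ)
    {y : V} (hy : y ∈ s) :
    ∃ x, IsSlot s {y} b x ∧ ∀ M, IsMaxCliqueIn G s M → Apart x (σ M) := by
  obtain ⟨ε, ⟨hεy, hεw, hεM⟩, hε⟩ : ∃ ε, (ε < (b y).2 ∧
      (∀ w, w ∈ s → w ≠ y → ε < |(b y).1 - (b w).1| / 3) ∧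
      ∀ M, IsMaxCliqueIn G s M → ε < |(b y).1 - (σ M).1| / 3) ∧ 0 < ε := by
    refine ((Eventually.and ?_ (.and ?_ ?_)).filter_mono nhdsWithin_le_nhds |>.and
      self_mem_nhdsWithin).exists (f := 𝓝[>] (0 : ℝ))
    · exact eventually_lt_nhds (hb.radius_pos y hy)
    · refine eventually_all.2 fun w => eventually_imp_distrib_left.2 fun hw =>
        eventually_imp_distrib_left.2 fun hwy => eventually_lt_nhds ?_
      have := sub_ne_zero.2 fun h => hwy (hb.injOn_fst hw hy h.symm)
      positivity
    · refine eventually_all.2 fun M => eventually_imp_distrib_left.2 fun hM =>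
        eventually_lt_nhds ?_
      have := sub_ne_zero.2 ((hb.isSlot M hM).fst_ne hb.radius_pos hy).symm
      positivity
  refine ⟨((b y).1 + ε, 2 * ε), ⟨by simpa using hε, fun u hu => ?_, fun u hu => ?_,
    fun w hw hwy => apart_add_two_mul hε.le (by linarith [hεw w hw hwy])⟩,
    fun M hM => apart_add_two_mul hε.le (by linarith [hεM M hM])⟩
  · rw [Set.mem_singleton_iff.1 hu, Linked, add_sub_cancel_left, abs_of_pos hε]
    exact lt_min (by linarith) hεy
  · rw [Set.mem_singleton_iff.1 hu]
    exact (lt_add_of_pos_right _ hε).ne'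

lemma IsSlottedRealization.exists_slot_neighborSet_inter [Finite V] (hG : G.DetourAdj)
    (hb : IsSlottedRealization G s b σ) {v : V} (hv : v ∉ s) (hs : (G.induce s).Preconnected)
    (hvs : (G.induce (insert v s)).Preconnected) :
    ∃ x, IsSlot s (G.neighborSet v ∩ s) b x ∧
      ∀ M, IsMaxCliqueIn G s M → M ≠ G.neighborSet v ∩ s → Apart x (σ M) := by
  rcases hG.isMaxCliqueIn_or_eq_singleton hv hs hvs with hC | ⟨y, hy, hC⟩
  · exact ⟨σ _, hb.isSlot _ hC, fun M hM hMC => hb.apart_slot _ _ hC hM hMC.symm⟩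
  · obtain ⟨x, hx, hxσ⟩ := hb.exists_slot_singleton hy
    exact ⟨x, hC ▸ hx, fun M hM _ => hxσ M hM⟩

theorem exists_isSlottedRealization [Finite V] (hG : G.DetourAdj) (s : Finset V)
    (hs : (G.induce (s : Set V)).Preconnected) : ∃ b σ, IsSlottedRealization G s b σ := by
  classical
  induction s using Finset.strongInduction with
  | H s ih =>
  rcases s.eq_empty_or_nonempty with rfl | hne
  · exact ⟨fun _ => (0, 1), _, by simpa using isSlottedRealization_empty _⟩
  obtain ⟨v, hv, hs'⟩ :=
    exists_preconnected_induce_diff_singleton ((connected_iff _).2 ⟨hs, hne.to_subtype⟩)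
  rw [← Finset.coe_erase] at hs'
  obtain ⟨b, σ, hb⟩ := ih _ (Finset.erase_ssubset hv) hs'
  have hvs : v ∉ (s.erase v : Set V) := by simp
  rw [← Finset.insert_erase hv, Finset.coe_insert] at hs ⊢
  obtain ⟨x, hx, hxσ⟩ := hb.exists_slot_neighborSet_inter hG hvs hs' hs
  exact hb.insert_of_isSlot hvs (hG.isClique_neighborSet_inter hvs hs') hx hxσ

lemma IsBallRealization.inCAND1 (hb : IsBallRealization G Set.univ b) : InCAND1 G := by
  refine ⟨fun v => (b v).1 - (b v).2, fun v => (b v).1 + (b v).2, fun v => (b v).1,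
    ⟨fun v => ?_, fun u v huv => ?_⟩, fun v => by ring⟩
  · have := hb.radius_pos v trivial
    constructor <;> linarith
  have hadj : G.Adj u v ↔ |(b u).1 - (b v).1| ≤ min (b u).2 (b v).2 :=
    ⟨fun h => (hb.linked_of_adj u trivial v trivial h).le, fun h => by_contra fun hn =>
      (hb.apart_of_not_adj u trivial v trivial huv hn).not_ge h⟩
  rw [hadj, le_min_iff, abs_sub_le_iff, abs_sub_le_iff]
  constructor
  · rintro ⟨⟨h₁, h₂⟩, h₃, h₄⟩
    exact ⟨by linarith, by linarith, by linarith, by linarith⟩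
  · rintro ⟨h₁, h₂, h₃, h₄⟩
    exact ⟨⟨by linarith, by linarith⟩, by linarith, by linarith⟩

end CAND1

/-- Every (connected) block graph — a graph in which every maximal biconnected
component induces a clique — belongs to `c-AND(1)`. -/
theorem blockGraph_mem_cand1 {V : Type*} [Fintype V] (G : SimpleGraph V)
    (hconn : G.Connected)
    (h : ∀ S : Set V, IsBlockSet G S → G.IsClique S) :
    InCAND1 G := by
  have hG : G.DetourAdj := SimpleGraph.detourAdj_of_forall_isBlockSet_isClique h
  have huniv : (G.induce ((Finset.univ : Finset V) : Set V)).Preconnected := by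
    rw [Finset.coe_univ]
    exact G.induceUnivIso.symm.preconnected_iff.1 hconn.preconnected
  obtain ⟨b, σ, hb⟩ := CAND1.exists_isSlottedRealization hG Finset.univ huniv
  rw [Finset.coe_univ] at hb
  exact hb.inCAND1
end
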